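/- arXiv:1201.4475 — 12 statements merged into one kernel-verified Lean document; each statement's English description precedes it below -/
import Mathlib

section
/- Let α ∈ [0,1). If f(z) = z + Σ_{n≥2} a_n z^n is holomorphic on the unit disk U ⊂ ℂ and Σ_{n≥2} n(n−α) |a_n| ≤ 1−α, then f is a convex function of order α on U, i.e., Re(1 + z f''(z)/f'(z)) > α for all z ∈ U. -/
/-!
Differentiating termwise, `f' z - 1 = ∑ (n+2) aₙ z^(n+1)` and `z f'' z = ∑ (n+2)(n+1) aₙ z^(n+1)`,
so with `r = ‖z‖`, `A = ∑ (n+2)‖aₙ‖` and `B = ∑ (n+2)(n+1)‖aₙ‖` we get `‖f' z - 1‖ ≤ r A` and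
`‖z f'' z‖ ≤ r B`. Since `(n+2)(n+2-α) = (n+2)(n+1) + (1-α)(n+2)`, the hypothesis reads
`B + (1-α) A ≤ 1-α`, whence `‖z f'' z / f' z‖ ≤ r B / (1 - r A) < 1 - α` and
`Re (1 + z f'' z / f' z) ≥ 1 - ‖z f'' z / f' z‖ > α`.
-/

open Metric

section PowerSeries

variable {𝕜 : Type*} [RCLike 𝕜]

theorem hasDerivAt_tsum_mul_pow_succ {b : ℕ → 𝕜} (e : ℕ → ℕ)
    (hb : Summable fun n => ‖((e n + 1 : ℕ) : 𝕜) * b n‖) {w : 𝕜} (hw : w ∈ ball (0 : 𝕜) 1) :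
    HasDerivAt (fun w => ∑' n, b n * w ^ (e n + 1))
      (∑' n, ((e n + 1 : ℕ) : 𝕜) * b n * w ^ e n) w := by
  refine hasDerivAt_tsum_of_isPreconnected (g := fun n w => b n * w ^ (e n + 1))
    (g' := fun n w => ((e n + 1 : ℕ) : 𝕜) * b n * w ^ e n) hb isOpen_ball
    (convex_ball (0 : 𝕜) 1).isPreconnected (fun n y _ => ?_) (fun n y hy => ?_)
    (mem_ball_self one_pos) (by simp) hw
  · exact ((hasDerivAt_pow (e n + 1) y).const_mul (b n)).congr_deriv
      (by rw [Nat.add_sub_cancel]; ring)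
  · rw [norm_mul, norm_pow]
    exact mul_le_of_le_one_right (norm_nonneg _)
      (pow_le_one₀ (norm_nonneg y) (mem_ball_zero_iff.mp hy).le)

theorem norm_tsum_mul_pow_add_le {b : ℕ → 𝕜} (e : ℕ → ℕ) (k : ℕ) (hb : Summable fun n => ‖b n‖)
    {w : 𝕜} (hw : ‖w‖ ≤ 1) : ‖∑' n, b n * w ^ (e n + k)‖ ≤ ‖w‖ ^ k * ∑' n, ‖b n‖ := by
  have hbound : ∀ n, ‖b n * w ^ (e n + k)‖ ≤ ‖w‖ ^ k * ‖b n‖ := fun n => by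
    rw [norm_mul, norm_pow, pow_add]
    calc ‖b n‖ * (‖w‖ ^ e n * ‖w‖ ^ k) = ‖w‖ ^ k * ‖b n‖ * ‖w‖ ^ e n := by ring
      _ ≤ ‖w‖ ^ k * ‖b n‖ := mul_le_of_le_one_right (by positivity) (pow_le_one₀ (norm_nonneg w) hw)
  have hsummable := (hb.mul_left (‖w‖ ^ k)).of_nonneg_of_le (fun _ => norm_nonneg _) hbound
  calc ‖∑' n, b n * w ^ (e n + k)‖ ≤ ∑' n, ‖b n * w ^ (e n + k)‖ :=
        norm_tsum_le_tsum_norm hsummable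
    _ ≤ ∑' n, ‖w‖ ^ k * ‖b n‖ := hsummable.tsum_le_tsum hbound (hb.mul_left _)
    _ = ‖w‖ ^ k * ∑' n, ‖b n‖ := tsum_mul_left

end PowerSeries

theorem norm_natCast_add_two_mul (n : ℕ) (x : ℂ) :
    ‖((n + 1 + 1 : ℕ) : ℂ) * x‖ = ((n : ℝ) + 2) * ‖x‖ := by
  rw [norm_mul, Complex.norm_natCast]
  push_cast
  ring

section NormalizedSeries

variable {a : ℕ → ℂ} {f : ℂ → ℂ}

theorem hasDerivAt_of_hasSum_mul_pow_add_two
    (hf : ∀ z ∈ ball (0 : ℂ) 1, HasSum (fun n => a n * z ^ (n + 2)) (f z - z))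
    (hA : Summable fun n : ℕ => ((n : ℝ) + 2) * ‖a n‖) {w : ℂ} (hw : w ∈ ball (0 : ℂ) 1) :
    HasDerivAt f (1 + ∑' n, ((n + 1 + 1 : ℕ) : ℂ) * a n * w ^ (n + 1)) w := by
  have hA' : Summable fun n => ‖((n + 1 + 1 : ℕ) : ℂ) * a n‖ := by
    simpa only [norm_natCast_add_two_mul] using hA
  refine ((hasDerivAt_id w).add (hasDerivAt_tsum_mul_pow_succ (fun n => n + 1) hA' hw))
    |>.congr_of_eventuallyEq (Filter.eventuallyEq_of_mem (isOpen_ball.mem_nhds hw) ?_)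
  intro y hy
  simp [(hf y hy).tsum_eq]

theorem norm_deriv_sub_one_le
    (hf : ∀ z ∈ ball (0 : ℂ) 1, HasSum (fun n => a n * z ^ (n + 2)) (f z - z))
    (hA : Summable fun n : ℕ => ((n : ℝ) + 2) * ‖a n‖) {z : ℂ} (hz : z ∈ ball (0 : ℂ) 1) :
    ‖deriv f z - 1‖ ≤ ‖z‖ * ∑' n : ℕ, ((n : ℝ) + 2) * ‖a n‖ := by
  have hA' : Summable fun n => ‖((n + 1 + 1 : ℕ) : ℂ) * a n‖ := by
    simpa only [norm_natCast_add_two_mul] using hA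
  rw [(hasDerivAt_of_hasSum_mul_pow_add_two hf hA hz).deriv, add_sub_cancel_left]
  simpa only [norm_natCast_add_two_mul, pow_one] using
    norm_tsum_mul_pow_add_le (fun n => n) 1 hA' (mem_ball_zero_iff.mp hz).le

theorem norm_mul_deriv_deriv_le
    (hf : ∀ z ∈ ball (0 : ℂ) 1, HasSum (fun n => a n * z ^ (n + 2)) (f z - z))
    (hA : Summable fun n : ℕ => ((n : ℝ) + 2) * ‖a n‖)
    (hB : Summable fun n : ℕ => ((n : ℝ) + 2) * ((n : ℝ) + 1) * ‖a n‖) {z : ℂ}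
    (hz : z ∈ ball (0 : ℂ) 1) :
    ‖z * deriv (deriv f) z‖ ≤ ‖z‖ * ∑' n : ℕ, ((n : ℝ) + 2) * ((n : ℝ) + 1) * ‖a n‖ := by
  have hnorm : ∀ n, ‖((n + 1 : ℕ) : ℂ) * (((n + 1 + 1 : ℕ) : ℂ) * a n)‖
      = ((n : ℝ) + 2) * ((n : ℝ) + 1) * ‖a n‖ := fun n => by
    rw [norm_mul, Complex.norm_natCast, norm_natCast_add_two_mul]
    push_cast
    ring
  have hB' : Summable fun n => ‖((n + 1 : ℕ) : ℂ) * (((n + 1 + 1 : ℕ) : ℂ) * a n)‖ := by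
    simpa only [hnorm] using hB
  have hderiv : deriv f =ᶠ[nhds z] fun w => 1 + ∑' n, ((n + 1 + 1 : ℕ) : ℂ) * a n * w ^ (n + 1) :=
    Filter.eventuallyEq_of_mem (isOpen_ball.mem_nhds hz) fun w hw =>
      (hasDerivAt_of_hasSum_mul_pow_add_two hf hA hw).deriv
  rw [hderiv.deriv_eq, ((hasDerivAt_tsum_mul_pow_succ (fun n => n) hB' hz).const_add 1).deriv,
    norm_mul]
  gcongr
  simpa only [hnorm, pow_zero, one_mul, add_zero] using
    norm_tsum_mul_pow_add_le (fun n => n) 0 hB' (mem_ball_zero_iff.mp hz).le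

end NormalizedSeries

theorem lt_re_one_add_div {α r A B : ℝ} {D q : ℂ} (hα : α < 1) (hr0 : 0 ≤ r) (hr : r < 1)
    (hB : 0 ≤ B) (hD : ‖D - 1‖ ≤ r * A) (hq : ‖q‖ ≤ r * B) (hAB : B + (1 - α) * A ≤ 1 - α) :
    α < (1 + q / D).re := by
  have hA : A ≤ 1 := by nlinarith
  have hden : 1 - r * A ≤ ‖D‖ := by
    have := norm_sub_norm_le (1 : ℂ) D
    rw [norm_one, norm_sub_rev] at this
    linarith
  have hden_pos : 0 < 1 - r * A := by nlinarith
  have hquot : ‖q / D‖ < 1 - α := by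
    rw [norm_div, div_lt_iff₀ (hden_pos.trans_le hden)]
    nlinarith
  rw [Complex.add_re, Complex.one_re]
  linarith [neg_le_of_abs_le (Complex.abs_re_le_norm (q / D))]

theorem stmt_1_general (α : ℝ) (hα1 : α < 1) (a : ℕ → ℂ) (f : ℂ → ℂ)
    (hf : ∀ z ∈ Metric.ball (0 : ℂ) 1,
      HasSum (fun n : ℕ => a n * z ^ (n + 2)) (f z - z))
    (hS : Summable (fun n : ℕ => ((n : ℝ) + 2) * (((n : ℝ) + 2) - α) * ‖a n‖))
    (hsum : ∑' n : ℕ, ((n : ℝ) + 2) * (((n : ℝ) + 2) - α) * ‖a n‖ ≤ 1 - α) :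
    ∀ z ∈ Metric.ball (0 : ℂ) 1,
      α < (1 + z * deriv (deriv f) z / deriv f z).re := by
  intro z hz
  have hB : Summable fun n : ℕ => ((n : ℝ) + 2) * ((n : ℝ) + 1) * ‖a n‖ :=
    hS.of_nonneg_of_le (fun n => by positivity) fun n => by gcongr; linarith
  have hA : Summable fun n : ℕ => ((n : ℝ) + 2) * ‖a n‖ :=
    hB.of_nonneg_of_le (fun n => by positivity) fun n => by
      nlinarith [mul_nonneg (Nat.cast_nonneg (α := ℝ) n) (norm_nonneg (a n))]
  have hAB : ∑' n : ℕ, ((n : ℝ) + 2) * ((n : ℝ) + 1) * ‖a n‖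
      + (1 - α) * ∑' n : ℕ, ((n : ℝ) + 2) * ‖a n‖ ≤ 1 - α := by
    rw [← tsum_mul_left, ← hB.tsum_add (hA.mul_left _)]
    exact (tsum_congr fun n => by ring).trans_le hsum
  exact lt_re_one_add_div hα1 (norm_nonneg z) (mem_ball_zero_iff.mp hz)
    (tsum_nonneg fun n => by positivity) (norm_deriv_sub_one_le hf hA hz)
    (norm_mul_deriv_deriv_le hf hA hB hz) hAB

/-- If f(z) = z + Σ_{n≥2} a_n z^n is holomorphic on the unit disk and
Σ_{n≥2} n(n−α)|a_n| ≤ 1−α, then f is convex of order α: Re(1 + z f''(z)/f'(z)) > α. -/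
theorem stmt_1 (α : ℝ) (hα0 : 0 ≤ α) (hα1 : α < 1) (a : ℕ → ℂ) (f : ℂ → ℂ)
    (hf : ∀ z ∈ Metric.ball (0 : ℂ) 1,
      HasSum (fun n : ℕ => a n * z ^ (n + 2)) (f z - z))
    (hS : Summable (fun n : ℕ => ((n : ℝ) + 2) * (((n : ℝ) + 2) - α) * ‖a n‖))
    (hsum : ∑' n : ℕ, ((n : ℝ) + 2) * (((n : ℝ) + 2) - α) * ‖a n‖ ≤ 1 - α) :
    ∀ z ∈ Metric.ball (0 : ℂ) 1,
      α < (1 + z * deriv (deriv f) z / deriv f z).re :=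
  stmt_1_general α hα1 a f hf hS hsum
end

section
/- Let α ∈ [0,1). If f(z) = z + Σ_{n≥2} a_n z^n is holomorphic on the unit disk U ⊂ ℂ and Σ_{n≥2} (n−α) |a_n| ≤ 1−α, then f is starlike of order α, i.e., Re(z f'(z)/f(z)) > α for all z ∈ U \ {0}. -/
/-!
Writing `f z = z + ∑ aₙ z^(n+2)`, one has `z f'(z) - f(z) = ∑ (n+1) aₙ z^(n+2)`, so with
`r = |z|` the triangle inequality gives
`|z f' - f| + (1-α) |f - z| ≤ ∑ (n+2-α) |aₙ| r^(n+2) ≤ r² (1-α)`, which is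
`< (1-α) r ≤ (1-α) (|f| + |f - z|)`.
Hence `|z f'/f - 1| < 1 - α`, and in particular `Re (z f'/f) > α`.
-/

open Metric

theorem lt_re_div_of_norm_sub_lt {u v : ℂ} {α : ℝ} (h : ‖u - v‖ < (1 - α) * ‖v‖) :
    α < (u / v).re := by
  have hv : v ≠ 0 := by
    rintro rfl
    simp only [norm_zero, mul_zero] at h
    exact (norm_nonneg _).not_gt h
  have hquot : ‖(u - v) / v‖ < 1 - α := by
    rwa [norm_div, div_lt_iff₀ (norm_pos_iff.mpr hv)]
  have hsplit : u / v = 1 + (u - v) / v := by field_simp; ring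
  rw [hsplit, Complex.add_re, Complex.one_re]
  linarith [neg_abs_le ((u - v) / v).re, Complex.abs_re_le_norm ((u - v) / v)]

theorem norm_mul_natCast_mul_pow_le {c y : ℂ} (m : ℕ) (hy : ‖y‖ ≤ 1) :
    ‖c * ((m : ℂ) * y ^ (m - 1))‖ ≤ m * ‖c‖ := by
  rw [norm_mul, norm_mul, norm_pow, Complex.norm_natCast]
  calc ‖c‖ * (m * ‖y‖ ^ (m - 1)) ≤ ‖c‖ * (m * 1) := by
        gcongr; exact pow_le_one₀ (norm_nonneg y) hy
    _ = m * ‖c‖ := by ring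

theorem hasDerivAt_tsum_mul_pow_add {a : ℕ → ℂ} {k : ℕ}
    (ha : Summable fun n => ((n + k : ℕ) : ℝ) * ‖a n‖) {z : ℂ}
    (hz : z ∈ ball (0 : ℂ) 1) :
    HasDerivAt (fun y => ∑' n, a n * y ^ (n + k))
      (∑' n, a n * (((n + k : ℕ) : ℂ) * z ^ (n + k - 1))) z := by
  have hzero : Summable fun n => a n * (0 : ℂ) ^ (n + k) := by
    refine (hasSum_single 0 fun n hn => ?_).summable
    rw [zero_pow (by omega), mul_zero]
  exact hasDerivAt_tsum_of_isPreconnected ha isOpen_ball (convex_ball 0 1).isPreconnected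
    (fun n y _ => (hasDerivAt_pow (n + k) y).const_mul (a n))
    (fun n y hy => norm_mul_natCast_mul_pow_le (n + k) (mem_ball_zero_iff.mp hy).le)
    (mem_ball_self one_pos) hzero hz

theorem norm_hasSum_succ_mul_lt_mul_norm {α : ℝ} (hα1 : α < 1) {a : ℕ → ℂ}
    (hS : Summable fun n : ℕ => (((n : ℝ) + 2) - α) * ‖a n‖)
    (hsum : ∑' n : ℕ, (((n : ℝ) + 2) - α) * ‖a n‖ ≤ 1 - α)
    {z w t : ℂ} (hz : z ∈ ball (0 : ℂ) 1) (hz0 : z ≠ 0)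
    (hw : HasSum (fun n => a n * z ^ (n + 2)) (w - z))
    (ht : HasSum (fun n => ((n + 1 : ℕ) : ℂ) * a n * z ^ (n + 2)) t) :
    ‖t‖ < (1 - α) * ‖w‖ := by
  have hr0 : 0 < ‖z‖ := norm_pos_iff.mpr hz0
  have hr1 : ‖z‖ < 1 := mem_ball_zero_iff.mp hz
  set c : ℕ → ℝ := fun n => (((n : ℝ) + 2) - α) * ‖a n‖
  set p : ℕ → ℝ := fun n => ((n + 1 : ℕ) : ℝ) * ‖a n‖ * ‖z‖ ^ (n + 2)
  set q : ℕ → ℝ := fun n => ‖a n‖ * ‖z‖ ^ (n + 2)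
  have hcomb (n : ℕ) : p n + (1 - α) * q n ≤ ‖z‖ ^ 2 * c n := by
    have hc : 0 ≤ c n := mul_nonneg (by linarith [n.cast_nonneg (α := ℝ)]) (norm_nonneg _)
    calc p n + (1 - α) * q n = c n * ‖z‖ ^ (n + 2) := by simp only [p, q, c]; push_cast; ring
      _ ≤ c n * ‖z‖ ^ 2 :=
        mul_le_mul_of_nonneg_left (pow_le_pow_of_le_one hr0.le hr1.le (by omega)) hc
      _ = ‖z‖ ^ 2 * c n := mul_comm _ _
  have hq_le_p (n : ℕ) : q n ≤ p n :=
    le_mul_of_one_le_left (by positivity) (by simp) |>.trans_eq (mul_assoc _ _ _).symm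
  have hp : Summable p := (hS.mul_left (‖z‖ ^ 2)).of_nonneg_of_le (fun n => by positivity)
    fun n => by
      have : 0 ≤ (1 - α) * q n := mul_nonneg (sub_pos.mpr hα1).le (by positivity)
      linarith [hcomb n]
  have hq : Summable q := hp.of_nonneg_of_le (fun n => by positivity) hq_le_p
  have ht_le : ‖t‖ ≤ ∑' n, p n := ht.norm_le_of_bounded hp.hasSum fun n => by
    simp only [p, norm_mul, norm_pow, Complex.norm_natCast, le_refl]
  have hw_le : ‖w - z‖ ≤ ∑' n, q n := hw.norm_le_of_bounded hq.hasSum fun n => by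
    simp only [q, norm_mul, norm_pow, le_refl]
  have hsum_pq : ∑' n, p n + (1 - α) * ∑' n, q n ≤ ‖z‖ ^ 2 * (1 - α) :=
    calc ∑' n, p n + (1 - α) * ∑' n, q n = ∑' n, (p n + (1 - α) * q n) := by
          rw [hp.tsum_add (hq.mul_left _), tsum_mul_left]
      _ ≤ ∑' n, ‖z‖ ^ 2 * c n := (hp.add (hq.mul_left _)).tsum_le_tsum hcomb (hS.mul_left _)
      _ = ‖z‖ ^ 2 * ∑' n, c n := tsum_mul_left
      _ ≤ ‖z‖ ^ 2 * (1 - α) := by gcongr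
  have hr_lt : ‖z‖ ^ 2 * (1 - α) < ‖z‖ * (1 - α) := by
    have := mul_pos (mul_pos hr0 (sub_pos.mpr hr1)) (sub_pos.mpr hα1)
    nlinarith
  have hz_le : ‖z‖ ≤ ‖w‖ + ‖w - z‖ := by simpa using norm_sub_le w (w - z)
  nlinarith [mul_le_mul_of_nonneg_left hz_le (sub_pos.mpr hα1).le, norm_nonneg (w - z)]

theorem hasSum_mul_deriv_sub {a : ℕ → ℂ} {f : ℂ → ℂ}
    (hf : ∀ z ∈ ball (0 : ℂ) 1, HasSum (fun n => a n * z ^ (n + 2)) (f z - z))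
    (ha : Summable fun n => ((n + 2 : ℕ) : ℝ) * ‖a n‖) {z : ℂ}
    (hz : z ∈ ball (0 : ℂ) 1) :
    HasSum (fun n => ((n + 1 : ℕ) : ℂ) * a n * z ^ (n + 2)) (z * deriv f z - f z) := by
  set D := ∑' n, a n * (((n + 2 : ℕ) : ℂ) * z ^ (n + 2 - 1))
  have hf_eq : f =ᶠ[nhds z] fun y => y + ∑' n, a n * y ^ (n + 2) := by
    filter_upwards [isOpen_ball.mem_nhds hz] with y hy
    rw [(hf y hy).tsum_eq, add_sub_cancel]
  have hderiv : deriv f z = 1 + D :=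
    (((hasDerivAt_id z).add (hasDerivAt_tsum_mul_pow_add ha hz)).congr_of_eventuallyEq
      hf_eq).deriv
  have hD : HasSum (fun n => a n * (((n + 2 : ℕ) : ℂ) * z ^ (n + 2 - 1))) D :=
    (ha.of_norm_bounded fun n =>
      norm_mul_natCast_mul_pow_le (n + 2) (mem_ball_zero_iff.mp hz).le).hasSum
  have hterm : (fun n => ((n + 1 : ℕ) : ℂ) * a n * z ^ (n + 2)) =
      fun n => z * (a n * (((n + 2 : ℕ) : ℂ) * z ^ (n + 2 - 1))) - a n * z ^ (n + 2) := by
    funext n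
    rw [show n + 2 - 1 = n + 1 from rfl]
    push_cast
    ring
  rw [hterm, hderiv, show z * (1 + D) - f z = z * D - (f z - z) by ring]
  exact (hD.mul_left z).sub (hf z hz)

theorem stmt_2_general (α : ℝ) (hα1 : α < 1) (a : ℕ → ℂ) (f : ℂ → ℂ)
    (hf : ∀ z ∈ Metric.ball (0 : ℂ) 1,
      HasSum (fun n : ℕ => a n * z ^ (n + 2)) (f z - z))
    (hS : Summable (fun n : ℕ => (((n : ℝ) + 2) - α) * ‖a n‖))
    (hsum : ∑' n : ℕ, (((n : ℝ) + 2) - α) * ‖a n‖ ≤ 1 - α) :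
    ∀ z ∈ Metric.ball (0 : ℂ) 1, z ≠ 0 →
      α < (z * deriv f z / f z).re := by
  intro z hz hz0
  have ha : Summable fun n => ((n + 2 : ℕ) : ℝ) * ‖a n‖ :=
    (hS.mul_left 2).of_nonneg_of_le (fun n => by positivity) fun n => by
      push_cast; nlinarith [norm_nonneg (a n), n.cast_nonneg (α := ℝ)]
  exact lt_re_div_of_norm_sub_lt <| norm_hasSum_succ_mul_lt_mul_norm hα1 hS hsum hz hz0
    (hf z hz) (hasSum_mul_deriv_sub hf ha hz)

/-- If f(z) = z + Σ_{n≥2} a_n z^n is holomorphic on the unit disk and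
Σ_{n≥2} (n−α)|a_n| ≤ 1−α, then f is starlike of order α: Re(z f'(z)/f(z)) > α on U \ {0}. -/
theorem stmt_2 (α : ℝ) (hα0 : 0 ≤ α) (hα1 : α < 1) (a : ℕ → ℂ) (f : ℂ → ℂ)
    (hf : ∀ z ∈ Metric.ball (0 : ℂ) 1,
      HasSum (fun n : ℕ => a n * z ^ (n + 2)) (f z - z))
    (hS : Summable (fun n : ℕ => (((n : ℝ) + 2) - α) * ‖a n‖))
    (hsum : ∑' n : ℕ, (((n : ℝ) + 2) - α) * ‖a n‖ ≤ 1 - α) :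
    ∀ z ∈ Metric.ball (0 : ℂ) 1, z ≠ 0 →
      α < (z * deriv f z / f z).re :=
  stmt_2_general α hα1 a f hf hS hsum
end

section
/- Let X be a complex Hilbert space, B its open unit ball, α ∈ [0,1), and f : B → X a locally biholomorphic mapping. If ‖Df(z)⁻¹ D²f(z)(x,x)‖ ≤ 1−α for all z ∈ B \ {0} and all x ∈ X with ‖x‖ = 1 and Re⟨x,z⟩ = 0, then f is a biholomorphic convex mapping of order α on B, i.e., ‖x‖² − Re⟨Df(z)⁻¹ D²f(z)(x,x), z⟩ > α‖x‖² for all z ∈ B \ {0} and x ∈ X \ {0} with Re⟨x,z⟩ = 0. -/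
/-!
Both sides of the convexity inequality are homogeneous of degree two in `x`, so it suffices to
treat unit vectors `x`. For those, Cauchy–Schwarz and `‖z‖ < 1` give
`Re ⟨Df(z)⁻¹ D²f(z)(x,x), z⟩ ≤ (1 - α) ‖z‖ < 1 - α`.
-/

open RCLike

section

variable {𝕜 E : Type*} [RCLike 𝕜] [NormedAddCommGroup E] [InnerProductSpace 𝕜 E]

local notation "⟪" x ", " y "⟫" => inner 𝕜 x y

theorem re_inner_lt_of_norm_le {w z : E} {r : ℝ} (hw : ‖w‖ ≤ r) (hr : 0 < r) (hz : ‖z‖ < 1) :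
    re ⟪w, z⟫ < r :=
  calc re ⟪w, z⟫ ≤ ‖w‖ * ‖z‖ := re_inner_le_norm w z
    _ ≤ r * ‖z‖ := by gcongr
    _ < r := mul_lt_of_lt_one_right hr hz

theorem ContinuousLinearMap.apply_bilinear_smul_smul (g : E →L[𝕜] E) (B : E →L[𝕜] E →L[𝕜] E)
    (c : 𝕜) (x : E) : g (B (c • x) (c • x)) = c ^ 2 • g (B x x) := by
  simp only [map_smul, smul_apply, smul_smul, sq]

theorem lt_sub_re_inner_apply_bilinear_of_norm_le (g : E →L[𝕜] E) (B : E →L[𝕜] E →L[𝕜] E)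
    {z : E} (hz : ‖z‖ < 1) {α : ℝ} (hα : α < 1)
    (hbound : ∀ u : E, ‖u‖ = 1 → re ⟪u, z⟫ = 0 → ‖g (B u u)‖ ≤ 1 - α)
    {x : E} (hx : x ≠ 0) (horth : re ⟪x, z⟫ = 0) :
    α * ‖x‖ ^ 2 < ‖x‖ ^ 2 - re ⟪g (B x x), z⟫ := by
  have hx₀ : ‖x‖ ≠ 0 := norm_ne_zero_iff.mpr hx
  obtain ⟨u, hu, hxu⟩ : ∃ u : E, ‖u‖ = 1 ∧ x = ((‖x‖ : ℝ) : 𝕜) • u :=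
    ⟨_, norm_smul_inv_norm hx, by rw [smul_smul, mul_inv_cancel₀ (ofReal_ne_zero.mpr hx₀), one_smul]⟩
  have hu_orth : re ⟪u, z⟫ = 0 := by
    rw [hxu, inner_smul_real_left, real_smul_eq_coe_mul, re_ofReal_mul] at horth
    exact (mul_eq_zero.mp horth).resolve_left hx₀
  have hre : re ⟪g (B x x), z⟫ = ‖x‖ ^ 2 * re ⟪g (B u u), z⟫ := by
    rw [hxu, ContinuousLinearMap.apply_bilinear_smul_smul, ← ofReal_pow, inner_smul_real_left,
      real_smul_eq_coe_mul, re_ofReal_mul, norm_smul, norm_ofReal, abs_norm, hu, mul_one]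
  have hlt := re_inner_lt_of_norm_le (𝕜 := 𝕜) (hbound u hu hu_orth) (sub_pos.mpr hα) hz
  have hx2 : 0 < ‖x‖ ^ 2 := by positivity
  rw [hre]
  nlinarith

end

theorem stmt_3_general {X : Type*} [NormedAddCommGroup X] [InnerProductSpace ℂ X]
    (α : ℝ) (hα1 : α < 1) (f : X → X)
    (hbound : ∀ z ∈ Metric.ball (0 : X) 1, z ≠ 0 → ∀ x : X, ‖x‖ = 1 →
      (inner ℂ x z : ℂ).re = 0 →
      ∀ g : X →L[ℂ] X,
        (fderiv ℂ f z).comp g = ContinuousLinearMap.id ℂ X →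
        g.comp (fderiv ℂ f z) = ContinuousLinearMap.id ℂ X →
        ‖g (fderiv ℂ (fderiv ℂ f) z x x)‖ ≤ 1 - α) :
    ∀ z ∈ Metric.ball (0 : X) 1, z ≠ 0 → ∀ x : X, x ≠ 0 →
      (inner ℂ x z : ℂ).re = 0 →
      ∀ g : X →L[ℂ] X,
        (fderiv ℂ f z).comp g = ContinuousLinearMap.id ℂ X →
        g.comp (fderiv ℂ f z) = ContinuousLinearMap.id ℂ X →
      α * ‖x‖ ^ 2 < ‖x‖ ^ 2 - (inner ℂ (g (fderiv ℂ (fderiv ℂ f) z x x)) z : ℂ).re := by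
  intro z hz hz0 x hx horth g hg₁ hg₂
  exact lt_sub_re_inner_apply_bilinear_of_norm_le g (fderiv ℂ (fderiv ℂ f) z)
    (mem_ball_zero_iff.mp hz) hα1 (fun u hu hu_orth => hbound z hz hz0 u hu hu_orth g hg₁ hg₂)
    hx horth

/-- If ‖Df(z)⁻¹ D²f(z)(x,x)‖ ≤ 1−α for all z ∈ B \ {0} and unit vectors x
with Re⟨x,z⟩ = 0, then f is a biholomorphic convex mapping of order α on B. -/
theorem stmt_3 {X : Type*} [NormedAddCommGroup X] [InnerProductSpace ℂ X] [CompleteSpace X]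
    (α : ℝ) (hα0 : 0 ≤ α) (hα1 : α < 1) (f : X → X)
    (hdiff : ∀ z ∈ Metric.ball (0 : X) 1, DifferentiableAt ℂ f z)
    (hdiff2 : ∀ z ∈ Metric.ball (0 : X) 1, DifferentiableAt ℂ (fderiv ℂ f) z)
    (hloc : ∀ z ∈ Metric.ball (0 : X) 1, ∃ g : X →L[ℂ] X,
      (fderiv ℂ f z).comp g = ContinuousLinearMap.id ℂ X ∧
      g.comp (fderiv ℂ f z) = ContinuousLinearMap.id ℂ X)
    (hbound : ∀ z ∈ Metric.ball (0 : X) 1, z ≠ 0 → ∀ x : X, ‖x‖ = 1 →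
      (inner ℂ x z : ℂ).re = 0 →
      ∀ g : X →L[ℂ] X,
        (fderiv ℂ f z).comp g = ContinuousLinearMap.id ℂ X →
        g.comp (fderiv ℂ f z) = ContinuousLinearMap.id ℂ X →
        ‖g (fderiv ℂ (fderiv ℂ f) z x x)‖ ≤ 1 - α) :
    ∀ z ∈ Metric.ball (0 : X) 1, z ≠ 0 → ∀ x : X, x ≠ 0 →
      (inner ℂ x z : ℂ).re = 0 →
      ∀ g : X →L[ℂ] X,
        (fderiv ℂ f z).comp g = ContinuousLinearMap.id ℂ X →
        g.comp (fderiv ℂ f z) = ContinuousLinearMap.id ℂ X →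
        α * ‖x‖ ^ 2 < ‖x‖ ^ 2 - (inner ℂ (g (fderiv ℂ (fderiv ℂ f) z x x)) z : ℂ).re :=
  stmt_3_general α hα1 f hbound
end

section
/- Let X be a complex Hilbert space with unit ball B, α ∈ [0,1), c < 1, and f : B → X locally biholomorphic with ‖Df(z) − I‖ ≤ c for all z ∈ B. If ‖D²f(z)(x,x)‖ ≤ (1−c)(1−α) for all x ∈ X with ‖x‖ = 1 and all z ∈ B \ {0} with Re⟨x,z⟩ = 0, then f is a biholomorphic convex mapping of order α on B. -/
/-!
Write `y = D²f(z)(x,x)` and `w = Df(z)⁻¹ y`. Since `‖Df(z) − I‖ ≤ c < 1`, the inverse satisfies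
`(1 − c)‖w‖ ≤ ‖y‖`, and by homogeneity the hypothesis on unit vectors gives
`‖y‖ ≤ (1 − c)(1 − α)‖x‖²`. Hence `Re⟨w, z⟩ ≤ ‖w‖‖z‖ ≤ (1 − α)‖x‖²‖z‖ < (1 − α)‖x‖²`.
-/

theorem one_sub_mul_norm_apply_le_of_norm_sub_id_le {𝕜 E : Type*} [NontriviallyNormedField 𝕜]
    [NormedAddCommGroup E] [NormedSpace 𝕜 E] {F g : E →L[𝕜] E} {c : ℝ}
    (hF : ‖F - ContinuousLinearMap.id 𝕜 E‖ ≤ c) (hg : F.comp g = ContinuousLinearMap.id 𝕜 E) (y : E) :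
    (1 - c) * ‖g y‖ ≤ ‖y‖ := by
  have hFg : F (g y) = y := by simpa using congrArg (fun T : E →L[𝕜] E => T y) hg
  have hclose : ‖y - g y‖ ≤ c * ‖g y‖ := by
    simpa [hFg] using (F - ContinuousLinearMap.id 𝕜 E).le_of_opNorm_le hF (g y)
  have hreverse : ‖g y‖ - ‖y‖ ≤ ‖y - g y‖ := norm_sub_rev (g y) y ▸ norm_sub_norm_le (g y) y
  linarith

theorem norm_apply_apply_le_of_forall_norm_eq_one {E F : Type*} [NormedAddCommGroup E]
    [InnerProductSpace ℂ E] [NormedAddCommGroup F] [NormedSpace ℂ F]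
    (D : E →L[ℂ] E →L[ℂ] F) (z : E) {M : ℝ}
    (hM : ∀ u : E, ‖u‖ = 1 → (inner ℂ u z).re = 0 → ‖D u u‖ ≤ M)
    {x : E} (hx : (inner ℂ x z).re = 0) :
    ‖D x x‖ ≤ M * ‖x‖ ^ 2 := by
  rcases eq_or_ne x 0 with rfl | hx0
  · simp
  have hxpos : 0 < ‖x‖ := norm_pos_iff.mpr hx0
  set u : E := ((‖x‖⁻¹ : ℝ) : ℂ) • x
  have hu : ‖u‖ = 1 := by
    simp [u, norm_smul, inv_mul_cancel₀ hxpos.ne']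
  have huz : (inner ℂ u z).re = 0 := by simp [u, hx]
  have hDu : ‖D u u‖ = ‖D x x‖ / ‖x‖ ^ 2 := by
    simp [u, norm_smul]
    field_simp
  exact (div_le_iff₀ (by positivity)).mp (hDu ▸ hM u hu huz)

theorem stmt_4_general {X : Type*} [NormedAddCommGroup X] [InnerProductSpace ℂ X]
    (α : ℝ) (hα1 : α < 1) (c : ℝ) (hc : c < 1) (f : X → X)
    (hI : ∀ z ∈ Metric.ball (0 : X) 1,
      ‖fderiv ℂ f z - ContinuousLinearMap.id ℂ X‖ ≤ c)
    (hbound : ∀ x : X, ‖x‖ = 1 → ∀ z ∈ Metric.ball (0 : X) 1, z ≠ 0 →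
      (inner ℂ x z : ℂ).re = 0 →
      ‖fderiv ℂ (fderiv ℂ f) z x x‖ ≤ (1 - c) * (1 - α)) :
    ∀ z ∈ Metric.ball (0 : X) 1, z ≠ 0 → ∀ x : X, x ≠ 0 →
      (inner ℂ x z : ℂ).re = 0 →
      ∀ g : X →L[ℂ] X,
        (fderiv ℂ f z).comp g = ContinuousLinearMap.id ℂ X →
        g.comp (fderiv ℂ f z) = ContinuousLinearMap.id ℂ X →
        α * ‖x‖ ^ 2 < ‖x‖ ^ 2 - (inner ℂ (g (fderiv ℂ (fderiv ℂ f) z x x)) z : ℂ).re := by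
  intro z hz hz0 x hx0 hxz g hg _
  set y := fderiv ℂ (fderiv ℂ f) z x x
  have hy : ‖y‖ ≤ (1 - c) * (1 - α) * ‖x‖ ^ 2 :=
    norm_apply_apply_le_of_forall_norm_eq_one _ z (fun u hu huz => hbound u hu z hz hz0 huz) hxz
  have hgy : (1 - c) * ‖g y‖ ≤ ‖y‖ := one_sub_mul_norm_apply_le_of_norm_sub_id_le (hI z hz) hg y
  have hw : ‖g y‖ ≤ (1 - α) * ‖x‖ ^ 2 :=
    le_of_mul_le_mul_left (by linarith) (sub_pos.mpr hc)
  have hz1 : ‖z‖ < 1 := mem_ball_zero_iff.mp hz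
  have hpos : 0 < (1 - α) * ‖x‖ ^ 2 := mul_pos (sub_pos.mpr hα1) (by positivity)
  have hre : (inner ℂ (g y) z).re < (1 - α) * ‖x‖ ^ 2 :=
    calc (inner ℂ (g y) z).re ≤ ‖g y‖ * ‖z‖ := (Complex.re_le_norm _).trans (norm_inner_le_norm _ _)
      _ ≤ (1 - α) * ‖x‖ ^ 2 * ‖z‖ := by gcongr
      _ < (1 - α) * ‖x‖ ^ 2 := mul_lt_of_lt_one_right hpos hz1
  linarith

/-- If ‖Df(z) − I‖ ≤ c < 1 on B and ‖D²f(z)(x,x)‖ ≤ (1−c)(1−α) for unit x,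
z ∈ B \ {0} with Re⟨x,z⟩ = 0, then f is a biholomorphic convex mapping of order α on B. -/
theorem stmt_4 {X : Type*} [NormedAddCommGroup X] [InnerProductSpace ℂ X] [CompleteSpace X]
    (α : ℝ) (hα0 : 0 ≤ α) (hα1 : α < 1) (c : ℝ) (hc : c < 1) (f : X → X)
    (hdiff : ∀ z ∈ Metric.ball (0 : X) 1, DifferentiableAt ℂ f z)
    (hdiff2 : ∀ z ∈ Metric.ball (0 : X) 1, DifferentiableAt ℂ (fderiv ℂ f) z)
    (hI : ∀ z ∈ Metric.ball (0 : X) 1,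
      ‖fderiv ℂ f z - ContinuousLinearMap.id ℂ X‖ ≤ c)
    (hbound : ∀ x : X, ‖x‖ = 1 → ∀ z ∈ Metric.ball (0 : X) 1, z ≠ 0 →
      (inner ℂ x z : ℂ).re = 0 →
      ‖fderiv ℂ (fderiv ℂ f) z x x‖ ≤ (1 - c) * (1 - α)) :
    ∀ z ∈ Metric.ball (0 : X) 1, z ≠ 0 → ∀ x : X, x ≠ 0 →
      (inner ℂ x z : ℂ).re = 0 →
      ∀ g : X →L[ℂ] X,
        (fderiv ℂ f z).comp g = ContinuousLinearMap.id ℂ X →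
        g.comp (fderiv ℂ f z) = ContinuousLinearMap.id ℂ X →
        α * ‖x‖ ^ 2 < ‖x‖ ^ 2 - (inner ℂ (g (fderiv ℂ (fderiv ℂ f) z x x)) z : ℂ).re :=
  stmt_4_general α hα1 c hc f hI hbound
end

section
/- Let X be a complex Hilbert space with unit ball B, α ∈ [0,1), and f(z) = z + Σ_{k≥2} A_k(z^k) a holomorphic mapping on B, where each A_k is a bounded symmetric k-linear operator. If Σ_{k≥2} k(k−α) ‖A_k‖ ≤ 1−α, then f ∈ K(B,α), i.e., f is a biholomorphic convex mapping of order α on B. -/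
/-!
Write `Df(z) = I + N(z)`. The weighted sums `P = ∑ k‖A_k‖` and `Q = ∑ k(k-1)‖A_k‖` bound
`‖N(z)‖ ≤ ‖z‖P` and `‖D²f(z)‖ ≤ Q` on the ball, and the hypothesis reads `Q + (1-α)P ≤ 1-α`.
Hence `‖N(z)‖ < 1`, so `Df(z)` is inverted by a Neumann series with `‖Df(z)⁻¹‖ ≤ 1/(1-‖z‖P)`, and
`Re⟨Df(z)⁻¹D²f(z)(x,x), z⟩ ≤ Q‖z‖‖x‖²/(1-‖z‖P) < (1-α)‖x‖²`.
Symmetry of `A_k` gives `D(A_k(z^k)) = k A_k(z^{k-1}, ·)`, again a homogeneous polynomial in `z`,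
which is what lets the series be differentiated termwise a second time.
-/

open Function Metric Topology

/-- `f ∈ K(B,α)`: `f` is a biholomorphic convex mapping of order `α` on the unit ball:
`f` is holomorphic and locally biholomorphic on `B` with `f(0)=0`, `Df(0)=I`, and
`‖x‖² − Re⟨Df(z)⁻¹D²f(z)(x,x), z⟩ > α‖x‖²` whenever `z ∈ B \ {0}`, `x ≠ 0`, `Re⟨x,z⟩ = 0`. -/
def IsConvexMappingOfOrder {X : Type*} [NormedAddCommGroup X] [InnerProductSpace ℂ X]
    [CompleteSpace X] (f : X → X) (α : ℝ) : Prop :=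
  (∀ z ∈ Metric.ball (0 : X) 1, DifferentiableAt ℂ f z) ∧
  f 0 = 0 ∧ fderiv ℂ f 0 = ContinuousLinearMap.id ℂ X ∧
  (∀ z ∈ Metric.ball (0 : X) 1, ∃ g : X →L[ℂ] X,
      (fderiv ℂ f z).comp g = ContinuousLinearMap.id ℂ X ∧
      g.comp (fderiv ℂ f z) = ContinuousLinearMap.id ℂ X) ∧
  ∀ z ∈ Metric.ball (0 : X) 1, z ≠ 0 → ∀ x : X, x ≠ 0 →
    (inner ℂ x z : ℂ).re = 0 →
    ∀ g : X →L[ℂ] X,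
      (fderiv ℂ f z).comp g = ContinuousLinearMap.id ℂ X →
      g.comp (fderiv ℂ f z) = ContinuousLinearMap.id ℂ X →
      α * ‖x‖ ^ 2 < ‖x‖ ^ 2 - (inner ℂ (g (fderiv ℂ (fderiv ℂ f) z x x)) z : ℂ).re

namespace ContinuousMultilinearMap

variable {𝕜 E F : Type*} [NontriviallyNormedField 𝕜] [NormedAddCommGroup E] [NormedSpace 𝕜 E]
  [NormedAddCommGroup F] [NormedSpace 𝕜 F] {n : ℕ}

theorem norm_toContinuousLinearMap_const_le
    (M : ContinuousMultilinearMap 𝕜 (fun _ : Fin (n + 1) => E) F) (z : E) (i : Fin (n + 1)) :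
    ‖M.toContinuousLinearMap (fun _ => z) i‖ ≤ ‖M‖ * ‖z‖ ^ n := by
  refine ContinuousLinearMap.opNorm_le_bound _ (by positivity) fun x => ?_
  calc ‖M (update (fun _ => z) i x)‖ ≤ ‖M‖ * ∏ j, ‖update (fun _ => z) i x j‖ := M.le_opNorm _
    _ = ‖M‖ * ‖z‖ ^ n * ‖x‖ := by
      simp [apply_update (fun _ => norm), Finset.prod_update_of_mem, Finset.card_sdiff]
      ring

theorem norm_sum_toContinuousLinearMap_const_le
    (M : ContinuousMultilinearMap 𝕜 (fun _ : Fin (n + 1) => E) F) (z : E) :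
    ‖∑ i, M.toContinuousLinearMap (fun _ => z) i‖ ≤ (n + 1) * ‖M‖ * ‖z‖ ^ n :=
  calc ‖∑ i, M.toContinuousLinearMap (fun _ => z) i‖
      ≤ ∑ i : Fin (n + 1), ‖M‖ * ‖z‖ ^ n :=
        norm_sum_le_of_le _ fun i _ => M.norm_toContinuousLinearMap_const_le z i
    _ = (n + 1) * ‖M‖ * ‖z‖ ^ n := by simp [mul_assoc]

theorem norm_sum_toContinuousLinearMap_const_le_pow_mul {n m : ℕ}
    {M : ContinuousMultilinearMap 𝕜 (fun _ : Fin (n + 1) => E) F} {c : ℝ}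
    (hM : (n + 1) * ‖M‖ ≤ c) (hmn : m ≤ n) {z : E} (hz : ‖z‖ ≤ 1) :
    ‖∑ i, M.toContinuousLinearMap (fun _ => z) i‖ ≤ ‖z‖ ^ m * c :=
  calc ‖∑ i, M.toContinuousLinearMap (fun _ => z) i‖ ≤ (n + 1) * ‖M‖ * ‖z‖ ^ n :=
        M.norm_sum_toContinuousLinearMap_const_le z
    _ ≤ c * ‖z‖ ^ m :=
        mul_le_mul hM (pow_le_pow_of_le_one (norm_nonneg z) hz hmn) (by positivity)
          ((by positivity : (0 : ℝ) ≤ (n + 1) * ‖M‖).trans hM)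
    _ = ‖z‖ ^ m * c := mul_comm _ _

theorem hasFDerivAt_apply_const
    (M : ContinuousMultilinearMap 𝕜 (fun _ : Fin (n + 1) => E) F) (z : E) :
    HasFDerivAt (fun w => M (fun _ => w)) (∑ i, M.toContinuousLinearMap (fun _ => z) i) z := by
  simpa using HasFDerivAt.multilinear_comp (f := M) fun _ => hasFDerivAt_id z

theorem toContinuousLinearMap_const_eq_curryRight
    {M : ContinuousMultilinearMap 𝕜 (fun _ : Fin (n + 1) => E) F}
    (hM : ∀ (v : Fin (n + 1) → E) (σ : Equiv.Perm (Fin (n + 1))), M (v ∘ σ) = M v)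
    (z : E) (i : Fin (n + 1)) :
    M.toContinuousLinearMap (fun _ => z) i = M.curryRight (fun _ => z) := by
  ext x
  have hsnoc :
      (Fin.snoc (fun _ => z) x : Fin (n + 1) → E) = update (fun _ => z) (Fin.last n) x := by
    ext j
    refine Fin.lastCases ?_ (fun j => ?_) j <;> simp [Fin.castSucc_ne_last]
  have hswap :
      update (fun _ => z) (Fin.last n) x ∘ Equiv.swap i (Fin.last n) = update (fun _ => z) i x := by
    rw [update_comp_equiv]
    simp [comp_def]
  simp [curryRight_apply, hsnoc, ← hswap, hM]

theorem sum_toContinuousLinearMap_const_eq_nsmul_curryRight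
    (M : ContinuousMultilinearMap 𝕜 (fun _ : Fin (n + 1) => E) F)
    (hM : ∀ (v : Fin (n + 1) → E) (σ : Equiv.Perm (Fin (n + 1))), M (v ∘ σ) = M v) (z : E) :
    ∑ i, M.toContinuousLinearMap (fun _ => z) i = (n + 1) • M.curryRight (fun _ => z) := by
  simp [toContinuousLinearMap_const_eq_curryRight hM]

end ContinuousMultilinearMap

section DiagonalSeries

variable {𝕜 E F : Type*} [RCLike 𝕜]
  [NormedAddCommGroup E] [NormedSpace 𝕜 E] [NormedAddCommGroup F] [NormedSpace 𝕜 F]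
  {d : ℕ → ℕ} {u : ℕ → ℝ} (B : ∀ k, ContinuousMultilinearMap 𝕜 (fun _ : Fin (d k + 1) => E) F)

theorem hasFDerivAt_tsum_apply_const [CompleteSpace F] (hu : Summable u)
    (hBu : ∀ k, (d k + 1) * ‖B k‖ ≤ u k) {z : E} (hz : z ∈ ball (0 : E) 1) :
    HasFDerivAt (fun w => ∑' k, B k (fun _ => w))
      (∑' k, ∑ i, (B k).toContinuousLinearMap (fun _ => z) i) z := by
  let _ : NormedSpace ℝ E := NormedSpace.restrictScalars ℝ 𝕜 E
  refine hasFDerivAt_tsum_of_isPreconnected hu isOpen_ball (convex_ball 0 1).isPreconnected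
    (fun k w _ => (B k).hasFDerivAt_apply_const w) (fun k w hw => ?_) (mem_ball_self one_pos)
    (summable_zero.congr fun k => (B k).map_zero.symm) hz
  simpa using (B k).norm_sum_toContinuousLinearMap_const_le_pow_mul (hBu k) (Nat.zero_le _)
    (mem_ball_zero_iff.1 hw).le

theorem norm_tsum_sum_toContinuousLinearMap_const_le (hu : Summable u)
    (hBu : ∀ k, (d k + 1) * ‖B k‖ ≤ u k) {m : ℕ} (hm : ∀ k, m ≤ d k) {z : E} (hz : ‖z‖ ≤ 1) :
    ‖∑' k, ∑ i, (B k).toContinuousLinearMap (fun _ => z) i‖ ≤ ‖z‖ ^ m * ∑' k, u k :=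
  tsum_of_norm_bounded (hu.hasSum.mul_left _) fun k =>
    (B k).norm_sum_toContinuousLinearMap_const_le_pow_mul (hBu k) (hm k) hz

end DiagonalSeries

theorem summable_weights_of_summable {α : ℝ} (hα : α ≤ 1) {a : ℕ → ℝ} (ha : ∀ k, 0 ≤ a k)
    (hS : Summable fun k : ℕ => ((k : ℝ) + 2) * (((k : ℝ) + 2) - α) * a k) :
    Summable (fun k : ℕ => ((k : ℝ) + 2) * a k) ∧
      Summable (fun k : ℕ => ((k : ℝ) + 2) * ((k : ℝ) + 1) * a k) := by
  refine ⟨hS.of_nonneg_of_le (fun k => mul_nonneg (by positivity) (ha k)) fun k => ?_,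
    hS.of_nonneg_of_le (fun k => mul_nonneg (by positivity) (ha k)) fun k => ?_⟩
  · have : (0 : ℝ) ≤ ((k : ℝ) + 2) * ((k : ℝ) + 1 - α) * a k :=
      mul_nonneg (mul_nonneg (by positivity) (by linarith [k.cast_nonneg (α := ℝ)])) (ha k)
    linarith
  · have : (0 : ℝ) ≤ ((k : ℝ) + 2) * (1 - α) * a k :=
      mul_nonneg (mul_nonneg (by positivity) (by linarith)) (ha k)
    linarith

theorem tsum_add_mul_tsum_eq {α : ℝ} {a : ℕ → ℝ} (h₁ : Summable fun k : ℕ => ((k : ℝ) + 2) * a k)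
    (h₂ : Summable fun k : ℕ => ((k : ℝ) + 2) * ((k : ℝ) + 1) * a k) :
    ∑' k : ℕ, ((k : ℝ) + 2) * ((k : ℝ) + 1) * a k + (1 - α) * ∑' k : ℕ, ((k : ℝ) + 2) * a k =
      ∑' k : ℕ, ((k : ℝ) + 2) * (((k : ℝ) + 2) - α) * a k := by
  rw [← tsum_mul_left, ← h₂.tsum_add (h₁.mul_left _)]
  exact tsum_congr fun k => by ring

namespace ContinuousLinearMap

variable {𝕜 E : Type*} [NontriviallyNormedField 𝕜] [NormedAddCommGroup E] [NormedSpace 𝕜 E]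

theorem exists_inverse_id_add [CompleteSpace E] {N : E →L[𝕜] E} (hN : ‖N‖ < 1) :
    ∃ g : E →L[𝕜] E, (ContinuousLinearMap.id 𝕜 E + N).comp g = ContinuousLinearMap.id 𝕜 E ∧
      g.comp (ContinuousLinearMap.id 𝕜 E + N) = ContinuousLinearMap.id 𝕜 E := by
  let u := Units.oneSub (-N) (by rwa [norm_neg])
  have hu : (u : E →L[𝕜] E) = ContinuousLinearMap.id 𝕜 E + N := by
    rw [Units.val_oneSub, sub_neg_eq_add, one_def]
  exact ⟨↑u⁻¹, by rw [← hu, ← mul_def, u.mul_inv, one_def],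
    by rw [← hu, ← mul_def, u.inv_mul, one_def]⟩

theorem norm_mul_one_sub_norm_le_one {g N : E →L[𝕜] E}
    (h : g.comp (ContinuousLinearMap.id 𝕜 E + N) = ContinuousLinearMap.id 𝕜 E) :
    ‖g‖ * (1 - ‖N‖) ≤ 1 := by
  have hg : g = ContinuousLinearMap.id 𝕜 E - g.comp N := by
    rw [comp_add, comp_id] at h
    exact eq_sub_of_add_eq h
  have : ‖g‖ ≤ 1 + ‖g‖ * ‖N‖ :=
    calc ‖g‖ = ‖ContinuousLinearMap.id 𝕜 E - g.comp N‖ := by rw [← hg]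
      _ ≤ ‖ContinuousLinearMap.id 𝕜 E‖ + ‖g.comp N‖ := norm_sub_le _ _
      _ ≤ 1 + ‖g‖ * ‖N‖ := add_le_add norm_id_le (opNorm_comp_le _ _)
  linarith

end ContinuousLinearMap

theorem re_inner_apply_apply_apply_le {X : Type*} [NormedAddCommGroup X] [InnerProductSpace ℂ X]
    (g : X →L[ℂ] X) (T : X →L[ℂ] X →L[ℂ] X) (x z : X) :
    (inner ℂ (g (T x x)) z : ℂ).re ≤ ‖g‖ * ‖T‖ * ‖z‖ * ‖x‖ ^ 2 :=
  calc (inner ℂ (g (T x x)) z : ℂ).re ≤ ‖g (T x x)‖ * ‖z‖ :=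
        (Complex.re_le_norm _).trans (norm_inner_le_norm _ _)
    _ ≤ ‖g‖ * (‖T‖ * ‖x‖ * ‖x‖) * ‖z‖ := by
        gcongr
        exact (g.le_opNorm _).trans
          (mul_le_mul_of_nonneg_left (T.le_opNorm₂ x x) (norm_nonneg g))
    _ = ‖g‖ * ‖T‖ * ‖z‖ * ‖x‖ ^ 2 := by ring

-- The final estimate, with `γ = ‖Df(z)⁻¹‖`, `τ = ‖D²f(z)‖`, `r = ‖z‖` and `ν = ‖Df(z) - I‖`.
theorem mul_mul_lt_one_sub {α P Q r ν γ τ : ℝ} (hα : α < 1)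
    (hPQ : Q + (1 - α) * P ≤ 1 - α) (hr₀ : 0 ≤ r) (hr₁ : r < 1) (hν : ν ≤ r * P)
    (hγ₀ : 0 ≤ γ) (hγ : γ * (1 - ν) ≤ 1) (hτ : τ ≤ Q) :
    γ * τ * r < 1 - α := by
  have hQr : τ * r ≤ (1 - α) * (r - ν) := by
    nlinarith [mul_le_mul_of_nonneg_right hτ hr₀, mul_le_mul_of_nonneg_right hPQ hr₀,
      mul_le_mul_of_nonneg_left hν (sub_pos.2 hα).le]
  rcases hγ₀.eq_or_lt with rfl | hγ₀
  · simpa using hα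
  · nlinarith [mul_le_mul_of_nonneg_left hQr hγ₀.le, mul_pos hγ₀ (sub_pos.2 hr₁)]

section PowerSeriesMap

variable {𝕜 E : Type*} [RCLike 𝕜] [NormedAddCommGroup E] [NormedSpace 𝕜 E]
  {A : (k : ℕ) → ContinuousMultilinearMap 𝕜 (fun _ : Fin (k + 2) => E) E} {f : E → E}

theorem hasFDerivAt_of_hasSum_apply_const [CompleteSpace E]
    (hf : ∀ z ∈ ball (0 : E) 1, HasSum (fun k => A k (fun _ => z)) (f z - z))
    (hA : Summable fun k : ℕ => ((k : ℝ) + 2) * ‖A k‖) {z : E} (hz : z ∈ ball (0 : E) 1) :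
    HasFDerivAt f (ContinuousLinearMap.id 𝕜 E +
      ∑' k, ∑ i, (A k).toContinuousLinearMap (fun _ => z) i) z := by
  have hfz : f =ᶠ[𝓝 z] fun w => w + ∑' k, A k (fun _ => w) := by
    filter_upwards [isOpen_ball.mem_nhds hz] with w hw
    rw [(hf w hw).tsum_eq, add_sub_cancel]
  refine ((hasFDerivAt_id z).add (hasFDerivAt_tsum_apply_const (d := fun k => k + 1) A hA
    (fun k => le_of_eq ?_) hz)).congr_of_eventuallyEq hfz
  push_cast
  ring

theorem norm_tsum_sum_toContinuousLinearMap_const_le_mul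
    (hA : Summable fun k : ℕ => ((k : ℝ) + 2) * ‖A k‖) {z : E} (hz : ‖z‖ ≤ 1) :
    ‖∑' k, ∑ i, (A k).toContinuousLinearMap (fun _ => z) i‖ ≤
      ‖z‖ * ∑' k : ℕ, ((k : ℝ) + 2) * ‖A k‖ := by
  simpa using norm_tsum_sum_toContinuousLinearMap_const_le (d := fun k => k + 1) A hA
    (fun k => le_of_eq (by push_cast; ring)) (m := 1) (fun k => by omega) hz

theorem map_zero_of_hasSum_apply_const
    (hf : ∀ z ∈ ball (0 : E) 1, HasSum (fun k => A k (fun _ => z)) (f z - z)) : f 0 = 0 := by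
  have hf0 := hf 0 (mem_ball_self one_pos)
  rw [show (fun k => A k fun _ => (0 : E)) = 0 from funext fun k => (A k).map_zero,
    sub_zero] at hf0
  exact (hasSum_zero.unique hf0).symm

theorem fderiv_zero_of_hasSum_apply_const [CompleteSpace E]
    (hf : ∀ z ∈ ball (0 : E) 1, HasSum (fun k => A k (fun _ => z)) (f z - z))
    (hA : Summable fun k : ℕ => ((k : ℝ) + 2) * ‖A k‖) :
    fderiv 𝕜 f 0 = ContinuousLinearMap.id 𝕜 E := by
  have hN0 : ‖∑' k, ∑ i, (A k).toContinuousLinearMap (fun _ => (0 : E)) i‖ ≤ 0 := by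
    simpa using norm_tsum_sum_toContinuousLinearMap_const_le_mul hA (by simp : ‖(0 : E)‖ ≤ 1)
  rw [(hasFDerivAt_of_hasSum_apply_const hf hA (mem_ball_self one_pos)).fderiv,
    norm_le_zero_iff.1 hN0, add_zero]

theorem norm_fderiv_fderiv_le_of_hasSum_apply_const [CompleteSpace E]
    (hAsymm : ∀ k (v : Fin (k + 2) → E) (σ : Equiv.Perm (Fin (k + 2))), A k (v ∘ σ) = A k v)
    (hf : ∀ z ∈ ball (0 : E) 1, HasSum (fun k => A k (fun _ => z)) (f z - z))
    (hA : Summable fun k : ℕ => ((k : ℝ) + 2) * ‖A k‖)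
    (hA₂ : Summable fun k : ℕ => ((k : ℝ) + 2) * ((k : ℝ) + 1) * ‖A k‖)
    {z : E} (hz : z ∈ ball (0 : E) 1) :
    ‖fderiv 𝕜 (fderiv 𝕜 f) z‖ ≤ ∑' k : ℕ, ((k : ℝ) + 2) * ((k : ℝ) + 1) * ‖A k‖ := by
  let B (k : ℕ) : ContinuousMultilinearMap 𝕜 (fun _ : Fin (k + 1) => E) (E →L[𝕜] E) :=
    (k + 2) • (A k).curryRight
  have hB (k : ℕ) : ((k : ℕ) + 1 : ℝ) * ‖B k‖ ≤ ((k : ℝ) + 2) * ((k : ℝ) + 1) * ‖A k‖ := by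
    have : ‖B k‖ ≤ (k + 2 : ℕ) * ‖(A k).curryRight‖ :=
      norm_nsmul_le (E := ContinuousMultilinearMap 𝕜 (fun _ : Fin (k + 1) => E) (E →L[𝕜] E))
    rw [ContinuousMultilinearMap.curryRight_norm] at this
    push_cast at this
    nlinarith
  have hDf :
      fderiv 𝕜 f =ᶠ[𝓝 z] fun w => ContinuousLinearMap.id 𝕜 E + ∑' k, B k (fun _ => w) := by
    filter_upwards [isOpen_ball.mem_nhds hz] with w hw
    rw [(hasFDerivAt_of_hasSum_apply_const hf hA hw).fderiv]
    congr 1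
    refine tsum_congr fun k => ?_
    rw [(A k).sum_toContinuousLinearMap_const_eq_nsmul_curryRight (hAsymm k)]
    rfl
  rw [(((hasFDerivAt_const _ z).add (hasFDerivAt_tsum_apply_const (d := fun k => k) B hA₂ hB
    hz)).congr_of_eventuallyEq hDf).fderiv, zero_add]
  simpa using norm_tsum_sum_toContinuousLinearMap_const_le (d := fun k => k) B hA₂ hB
    (m := 0) (fun k => k.zero_le) (mem_ball_zero_iff.1 hz).le

end PowerSeriesMap

theorem stmt_6_general {X : Type*} [NormedAddCommGroup X] [InnerProductSpace ℂ X] [CompleteSpace X]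
    (α : ℝ) (hα1 : α < 1)
    (A : (k : ℕ) → ContinuousMultilinearMap ℂ (fun _ : Fin (k + 2) => X) X)
    (hAsymm : ∀ k (v : Fin (k + 2) → X) (σ : Equiv.Perm (Fin (k + 2))),
      A k (v ∘ σ) = A k v)
    (f : X → X)
    (hf : ∀ z ∈ Metric.ball (0 : X) 1,
      HasSum (fun k : ℕ => A k (fun _ => z)) (f z - z))
    (hS : Summable (fun k : ℕ => ((k : ℝ) + 2) * (((k : ℝ) + 2) - α) * ‖A k‖))
    (hsum : ∑' k : ℕ, ((k : ℝ) + 2) * (((k : ℝ) + 2) - α) * ‖A k‖ ≤ 1 - α) :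
    IsConvexMappingOfOrder f α := by
  obtain ⟨hA, hA₂⟩ := summable_weights_of_summable hα1.le (fun k => norm_nonneg (A k)) hS
  have hPQ := (tsum_add_mul_tsum_eq (α := α) hA hA₂).trans_le hsum
  have hDf z (hz : z ∈ ball (0 : X) 1) := hasFDerivAt_of_hasSum_apply_const hf hA hz
  have hN z (hz : z ∈ ball (0 : X) 1) :=
    norm_tsum_sum_toContinuousLinearMap_const_le_mul hA (mem_ball_zero_iff.1 hz).le
  refine ⟨fun z hz => (hDf z hz).differentiableAt, map_zero_of_hasSum_apply_const hf,
    fderiv_zero_of_hasSum_apply_const hf hA, fun z hz => ?_, ?_⟩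
  · have hP1 : ∑' k : ℕ, ((k : ℝ) + 2) * ‖A k‖ ≤ 1 := by
      have : 0 ≤ ∑' k : ℕ, ((k : ℝ) + 2) * ((k : ℝ) + 1) * ‖A k‖ :=
        tsum_nonneg fun k => by positivity
      nlinarith
    rw [(hDf z hz).fderiv]
    exact ContinuousLinearMap.exists_inverse_id_add <|
      (hN z hz).trans_lt (by nlinarith [mem_ball_zero_iff.1 hz, norm_nonneg z])
  · intro z hz _ x hx _ g _ hg
    rw [(hDf z hz).fderiv] at hg
    have hcoef := mul_mul_lt_one_sub hα1 hPQ (norm_nonneg z) (mem_ball_zero_iff.1 hz) (hN z hz)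
      (norm_nonneg g) (g.norm_mul_one_sub_norm_le_one hg)
      (norm_fderiv_fderiv_le_of_hasSum_apply_const hAsymm hf hA hA₂ hz)
    have hre := re_inner_apply_apply_apply_le g (fderiv ℂ (fderiv ℂ f) z) x z
    have hx2 : 0 < ‖x‖ ^ 2 := by positivity
    linarith [mul_lt_mul_of_pos_right hcoef hx2]

/-- If f(z) = z + Σ_{k≥2} A_k(z^k) with Σ_{k≥2} k(k−α)‖A_k‖ ≤ 1−α,
then f ∈ K(B,α). -/
theorem stmt_6 {X : Type*} [NormedAddCommGroup X] [InnerProductSpace ℂ X] [CompleteSpace X]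
    (α : ℝ) (hα0 : 0 ≤ α) (hα1 : α < 1)
    (A : (k : ℕ) → ContinuousMultilinearMap ℂ (fun _ : Fin (k + 2) => X) X)
    (hAsymm : ∀ k (v : Fin (k + 2) → X) (σ : Equiv.Perm (Fin (k + 2))),
      A k (v ∘ σ) = A k v)
    (f : X → X)
    (hf : ∀ z ∈ Metric.ball (0 : X) 1,
      HasSum (fun k : ℕ => A k (fun _ => z)) (f z - z))
    (hS : Summable (fun k : ℕ => ((k : ℝ) + 2) * (((k : ℝ) + 2) - α) * ‖A k‖))
    (hsum : ∑' k : ℕ, ((k : ℝ) + 2) * (((k : ℝ) + 2) - α) * ‖A k‖ ≤ 1 - α) :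
    IsConvexMappingOfOrder f α :=
  stmt_6_general α hα1 A hAsymm f hf hS hsum
end

section
/- Let X be a complex Hilbert space with unit ball B, α ∈ [0,1), a ∈ ℂ with 0 < |a| ≤ 1/2, and u ∈ X with ‖u‖ = 1. Then f(z) = z + a⟨z,u⟩² u is a biholomorphic convex mapping of order α on B if and only if |a| ≤ (1−α)/(4−2α). -/
/-!
For `f z = z + a ⟪u, z⟫² u` we have `Df(z) = 1 + 2a⟪u, z⟫ P` with `P = rankOne u u` idempotent, and
`D²f(z)(x, x) = 2a⟪u, x⟫² u`. Hence `Df(z)` is invertible iff `1 + 2a⟪u, z⟫ ≠ 0`, and then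
`Df(z)⁻¹ D²f(z)(x, x) = 2a⟪u, x⟫² / (1 + 2a⟪u, z⟫) • u`, which turns the convexity inequality into a
scalar one. Writing `ρ = 2‖a‖‖⟪u, z⟫‖ < 1`, the term to be bounded is at most `ρ / (1 - ρ) ‖x‖²`,
and `ρ / (1 - ρ) < 1 - α` amounts to `ρ (2 - α) < 1 - α`, which holds on the ball when
`‖a‖ ≤ (1 - α) / (4 - 2α)`. Conversely, for `z = -r k u` and `x = i k u` with `a k = ‖a‖`,
`‖k‖ = 1`, that estimate is an equality; if `‖a‖` exceeds the bound, then
`r = (1 - α) / (2‖a‖(2 - α)) < 1` gives `ρ (2 - α) = 1 - α` and the inequality fails.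
-/

open InnerProductSpace ContinuousLinearMap ComplexConjugate Metric

section Idempotent

variable {𝕜 R : Type*} [Field 𝕜] [Ring R] [Algebra 𝕜 R] {p : R}

theorem IsIdempotentElem.one_add_smul_mul_one_add_smul (hp : IsIdempotentElem p) (β γ : 𝕜) :
    (1 + β • p) * (1 + γ • p) = 1 + (β + γ + β * γ) • p := by
  simp only [add_mul, mul_add, one_mul, mul_one, smul_mul_smul, hp.eq, add_smul]
  abel

theorem IsIdempotentElem.one_add_smul_mul_self (hp : IsIdempotentElem p) (β : 𝕜) :
    (1 + β • p) * p = (1 + β) • p := by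
  rw [add_mul, one_mul, smul_mul_assoc, hp.eq, add_smul, one_smul]

theorem IsIdempotentElem.isUnit_one_add_smul_iff (hp : IsIdempotentElem p) (hp0 : p ≠ 0)
    {β : 𝕜} : IsUnit (1 + β • p) ↔ 1 + β ≠ 0 := by
  refine ⟨fun hu hβ => hp0 ?_, fun hβ => isUnit_iff_exists.mpr ⟨1 + (-β / (1 + β)) • p, ?_, ?_⟩⟩
  · rw [← hu.mul_right_eq_zero, hp.one_add_smul_mul_self, hβ, zero_smul]
  all_goals
    rw [hp.one_add_smul_mul_one_add_smul]
    convert add_zero (1 : R) using 2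
    rw [smul_eq_zero]
    left
    field_simp
    ring

theorem IsIdempotentElem.mul_eq_inv_smul_of_mul_one_add_smul_eq_one (hp : IsIdempotentElem p)
    {β : 𝕜} {g : R} (hg : g * (1 + β • p) = 1) : g * p = (1 + β)⁻¹ • p := by
  have h : (1 + β) • (g * p) = p := by
    rw [← mul_smul_comm, ← hp.one_add_smul_mul_self, ← mul_assoc, hg, one_mul]
  rcases eq_or_ne (1 + β) 0 with hβ | hβ
  · rw [hβ, zero_smul] at h
    rw [← h, mul_zero, smul_zero]
  · rw [← inv_smul_smul₀ hβ (g * p), h]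

end Idempotent

theorem rankOne_self_apply_self {𝕜 E : Type*} [RCLike 𝕜] [NormedAddCommGroup E]
    [InnerProductSpace 𝕜 E] {u : E} (hu : ‖u‖ = 1) : rankOne 𝕜 u u u = u := by
  simp [inner_self_eq_norm_sq_to_K, hu]

section Scalar

open Complex

variable {α : ℝ} {a w : ℂ}

theorem two_mul_norm_mul_norm_mul_lt (hα : α < 1) (ha : ‖a‖ ≤ (1 - α) / (4 - 2 * α))
    (hw : ‖w‖ < 1) : 2 * ‖a‖ * ‖w‖ * (2 - α) < 1 - α := by
  have ha' : ‖a‖ * (4 - 2 * α) ≤ 1 - α := (le_div_iff₀ (by linarith)).mp ha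
  nlinarith [norm_nonneg w, norm_nonneg a, mul_le_mul_of_nonneg_right ha' (norm_nonneg w)]

theorem one_add_two_mul_mul_ne_zero (h : 2 * ‖a‖ * ‖w‖ < 1) : 1 + 2 * a * w ≠ 0 := by
  intro h0
  have h1 : ‖2 * a * w‖ = 1 := by rw [show 2 * a * w = -1 by linear_combination h0]; simp
  rw [norm_mul, norm_mul, Complex.norm_two] at h1
  linarith

theorem re_conj_div_mul_le (t : ℂ) (h : 2 * ‖a‖ * ‖w‖ < 1) :
    (conj (2 * a * t ^ 2 / (1 + 2 * a * w)) * w).re ≤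
      2 * ‖a‖ * ‖w‖ / (1 - 2 * ‖a‖ * ‖w‖) * ‖t‖ ^ 2 := by
  have hden : 1 - 2 * ‖a‖ * ‖w‖ ≤ ‖1 + 2 * a * w‖ := by
    have := norm_sub_norm_le (1 : ℂ) (-(2 * a * w))
    simp only [norm_one, norm_neg, norm_mul, Complex.norm_two, sub_neg_eq_add] at this
    linarith
  calc (conj (2 * a * t ^ 2 / (1 + 2 * a * w)) * w).re
      ≤ ‖conj (2 * a * t ^ 2 / (1 + 2 * a * w)) * w‖ := re_le_norm _
    _ = 2 * ‖a‖ * ‖w‖ * ‖t‖ ^ 2 / ‖1 + 2 * a * w‖ := by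
      simp only [norm_mul, Complex.norm_conj, norm_div, norm_pow, Complex.norm_two]
      ring
    _ ≤ 2 * ‖a‖ * ‖w‖ * ‖t‖ ^ 2 / (1 - 2 * ‖a‖ * ‖w‖) := by gcongr
    _ = 2 * ‖a‖ * ‖w‖ / (1 - 2 * ‖a‖ * ‖w‖) * ‖t‖ ^ 2 := by ring

theorem re_conj_div_mul_lt {t : ℂ} {N : ℝ} (hα : α < 1) (ha : ‖a‖ ≤ (1 - α) / (4 - 2 * α))
    (hw : ‖w‖ < 1) (ht : ‖t‖ ≤ N) (hN : 0 < N) :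
    (conj (2 * a * t ^ 2 / (1 + 2 * a * w)) * w).re < (1 - α) * N ^ 2 := by
  have hρ := two_mul_norm_mul_norm_mul_lt hα ha hw
  set ρ := 2 * ‖a‖ * ‖w‖
  have hρ0 : 0 ≤ ρ := by positivity
  have hρ1 : ρ < 1 := by nlinarith
  have hc : ρ / (1 - ρ) < 1 - α := by rw [div_lt_iff₀ (by linarith)]; nlinarith
  calc (conj (2 * a * t ^ 2 / (1 + 2 * a * w)) * w).re ≤ ρ / (1 - ρ) * ‖t‖ ^ 2 :=
        re_conj_div_mul_le t hρ1
    _ ≤ ρ / (1 - ρ) * N ^ 2 := by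
      have : 0 ≤ ρ / (1 - ρ) := div_nonneg hρ0 (by linarith)
      gcongr
    _ < (1 - α) * N ^ 2 := by gcongr

theorem exists_norm_eq_one_mul_eq_norm (a : ℂ) : ∃ k : ℂ, ‖k‖ = 1 ∧ a * k = ‖a‖ := by
  refine ⟨exp (-(arg a * I)), by rw [← neg_mul, ← ofReal_neg, norm_exp_ofReal_mul_I], ?_⟩
  calc a * exp (-(arg a * I)) = ‖a‖ * exp (arg a * I) * exp (-(arg a * I)) := by
        rw [norm_mul_exp_arg_mul_I]
    _ = ‖a‖ := by rw [mul_assoc, ← exp_add, add_neg_cancel, exp_zero, mul_one]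

theorem conj_div_mul_eq_of_mul_eq_norm {k : ℂ} (hk : a * k = ‖a‖) (hk1 : ‖k‖ = 1) {r : ℝ}
    (hr : 2 * ‖a‖ * r ≠ 1) :
    conj (2 * a * (I * k) ^ 2 / (1 + 2 * a * (-r * k))) * (-r * k) =
      ((2 * ‖a‖ * r / (1 - 2 * ‖a‖ * r) : ℝ) : ℂ) := by
  have hnum : 2 * a * (I * k) ^ 2 = -(2 * ‖a‖ * k) := by
    linear_combination (-2 * k) * hk + (2 * a * k ^ 2) * I_sq
  have hden : 1 + 2 * a * (-r * k) = ((1 - 2 * ‖a‖ * r : ℝ) : ℂ) := by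
    push_cast
    linear_combination (-2 * r : ℂ) * hk
  have hkk : conj k * k = 1 := by rw [conj_mul', hk1]; norm_num
  have hden0 : ((1 - 2 * ‖a‖ * r : ℝ) : ℂ) ≠ 0 := ofReal_ne_zero.mpr (sub_ne_zero.mpr hr.symm)
  rw [hnum, hden, map_div₀, conj_ofReal, div_mul_eq_mul_div, ofReal_div, div_left_inj' hden0]
  simp only [map_neg, map_mul, conj_ofReal, map_ofNat]
  push_cast
  linear_combination (2 * ‖a‖ * r : ℂ) * hkk

end Scalar

section QuadraticPerturbation

variable {X : Type*} [NormedAddCommGroup X] [InnerProductSpace ℂ X]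

noncomputable def quadraticPerturbation (a : ℂ) (u : X) (z : X) : X :=
  z + (a * ⟪u, z⟫_ℂ ^ 2) • u

theorem hasFDerivAt_quadraticPerturbation (a : ℂ) (u z : X) :
    HasFDerivAt (quadraticPerturbation a u)
      (ContinuousLinearMap.id ℂ X + (2 * a * ⟪u, z⟫_ℂ) • rankOne ℂ u u) z := by
  have h := (((innerSL ℂ u).hasFDerivAt (x := z)).pow 2).const_mul a |>.smul_const u
  refine (hasFDerivAt_id z).add (h.congr_fderiv ?_)
  ext y
  simp only [smulRight_apply, smul_apply, innerSL_apply_apply, rankOne_apply, smul_smul]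
  ring_nf

theorem fderiv_quadraticPerturbation (a : ℂ) (u : X) :
    fderiv ℂ (quadraticPerturbation a u) =
      fun z => ContinuousLinearMap.id ℂ X + (2 * a * ⟪u, z⟫_ℂ) • rankOne ℂ u u :=
  funext fun z => (hasFDerivAt_quadraticPerturbation a u z).fderiv

theorem fderiv_fderiv_quadraticPerturbation_apply (a : ℂ) (u z x : X) :
    fderiv ℂ (fderiv ℂ (quadraticPerturbation a u)) z x x = (2 * a * ⟪u, x⟫_ℂ ^ 2) • u := by
  have h : HasFDerivAt (fun z => ContinuousLinearMap.id ℂ X + (2 * a * ⟪u, z⟫_ℂ) • rankOne ℂ u u)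
      (((2 * a) • innerSL ℂ u).smulRight (rankOne ℂ u u)) z :=
    ((innerSL ℂ u).hasFDerivAt.const_mul (2 * a)).smul_const (rankOne ℂ u u) |>.const_add _
  rw [fderiv_quadraticPerturbation, h.fderiv]
  simp only [smulRight_apply, smul_apply, innerSL_apply_apply, rankOne_apply, smul_smul]
  ring_nf

def QuadraticConvexityCondition (a : ℂ) (u : X) (α : ℝ) : Prop :=
  ∀ z ∈ ball (0 : X) 1, z ≠ 0 → ∀ x : X, x ≠ 0 → (⟪x, z⟫_ℂ).re = 0 →
    α * ‖x‖ ^ 2 < ‖x‖ ^ 2 - (conj (2 * a * ⟪u, x⟫_ℂ ^ 2 / (1 + 2 * a * ⟪u, z⟫_ℂ)) * ⟪u, z⟫_ℂ).re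

theorem isConvexMappingOfOrder_quadraticPerturbation_iff [CompleteSpace X] {u : X}
    (hu : ‖u‖ = 1) (a : ℂ) (α : ℝ) :
    IsConvexMappingOfOrder (quadraticPerturbation a u) α ↔
      (∀ z ∈ ball (0 : X) 1, 1 + 2 * a * ⟪u, z⟫_ℂ ≠ 0) ∧ QuadraticConvexityCondition a u α := by
  set f := quadraticPerturbation a u
  have hp : IsIdempotentElem (rankOne ℂ u u) := isIdempotentElem_rankOne_self hu
  have hu0 : u ≠ 0 := norm_ne_zero_iff.mp (by rw [hu]; exact one_ne_zero)
  have hinv_iff (z : X) : (∃ g : X →L[ℂ] X, (fderiv ℂ f z).comp g = .id ℂ X ∧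
      g.comp (fderiv ℂ f z) = .id ℂ X) ↔ 1 + 2 * a * ⟪u, z⟫_ℂ ≠ 0 := by
    rw [← hp.isUnit_one_add_smul_iff (rankOne_ne_zero hu0 hu0), isUnit_iff_exists,
      fderiv_quadraticPerturbation]
    rfl
  have hinner (z x : X) (g : X →L[ℂ] X) (hg : g.comp (fderiv ℂ f z) = .id ℂ X) :
      ⟪g (fderiv ℂ (fderiv ℂ f) z x x), z⟫_ℂ =
        conj (2 * a * ⟪u, x⟫_ℂ ^ 2 / (1 + 2 * a * ⟪u, z⟫_ℂ)) * ⟪u, z⟫_ℂ := by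
    rw [fderiv_quadraticPerturbation] at hg
    have hgu := congrArg (fun T => T u) (hp.mul_eq_inv_smul_of_mul_one_add_smul_eq_one hg)
    simp only [mul_def, coe_comp, Function.comp_apply, smul_apply,
      rankOne_self_apply_self hu] at hgu
    rw [fderiv_fderiv_quadraticPerturbation_apply, map_smul, hgu, smul_smul, inner_smul_left,
      div_eq_mul_inv]
  constructor
  · rintro ⟨-, -, -, hinv, hconv⟩
    refine ⟨fun z hz => (hinv_iff z).mp (hinv z hz), fun z hz hz0 x hx0 hxz => ?_⟩
    obtain ⟨g, hg1, hg2⟩ := hinv z hz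
    rw [← hinner z x g hg2]
    exact hconv z hz hz0 x hx0 hxz g hg1 hg2
  · rintro ⟨hinv, hconv⟩
    refine ⟨fun z _ => (hasFDerivAt_quadraticPerturbation a u z).differentiableAt,
      by simp [f, quadraticPerturbation], by simp [f, fderiv_quadraticPerturbation],
      fun z hz => (hinv_iff z).mpr (hinv z hz), ?_⟩
    intro z hz hz0 x hx0 hxz g _ hg
    rw [hinner z x g hg]
    exact hconv z hz hz0 x hx0 hxz

theorem QuadraticConvexityCondition.div_lt {a : ℂ} {u : X} {α : ℝ}
    (h : QuadraticConvexityCondition a u α) (hu : ‖u‖ = 1) {r : ℝ} (hr0 : 0 < r) (hr1 : r < 1)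
    (hr : 2 * ‖a‖ * r ≠ 1) : 2 * ‖a‖ * r / (1 - 2 * ‖a‖ * r) < 1 - α := by
  obtain ⟨k, hk1, hk⟩ := exists_norm_eq_one_mul_eq_norm a
  have hu0 : u ≠ 0 := norm_ne_zero_iff.mp (by rw [hu]; exact one_ne_zero)
  have hk0 : k ≠ 0 := norm_ne_zero_iff.mp (by rw [hk1]; exact one_ne_zero)
  have huu : ⟪u, u⟫_ℂ = 1 := by simp [inner_self_eq_norm_sq_to_K, hu]
  have horth : ⟪(Complex.I * k) • u, (-r * k) • u⟫_ℂ = r * Complex.I := by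
    have hkk : conj k * k = 1 := by rw [Complex.conj_mul', hk1]; norm_num
    rw [inner_smul_left, inner_smul_right, huu, mul_one, map_mul, Complex.conj_I]
    linear_combination (r * Complex.I) * hkk
  have key := h ((-r * k) • u) (by simp [norm_smul, hu, hk1, abs_of_pos hr0, hr1])
    (smul_ne_zero (mul_ne_zero (by simp [hr0.ne']) hk0) hu0)
    ((Complex.I * k) • u) (smul_ne_zero (mul_ne_zero Complex.I_ne_zero hk0) hu0)
    (by rw [horth]; simp)
  rw [inner_smul_right, inner_smul_right, huu, mul_one, mul_one,
    conj_div_mul_eq_of_mul_eq_norm hk hk1 hr, Complex.ofReal_re, norm_smul, hu, mul_one, norm_mul,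
    Complex.norm_I, hk1] at key
  linarith

theorem QuadraticConvexityCondition.norm_le {a : ℂ} {u : X} {α : ℝ}
    (h : QuadraticConvexityCondition a u α) (hu : ‖u‖ = 1) (hα : α < 1) :
    ‖a‖ ≤ (1 - α) / (4 - 2 * α) := by
  by_contra! hlt
  have hα2 : 0 < 2 - α := by linarith
  have hA : 1 - α < 2 * ‖a‖ * (2 - α) := by
    rw [div_lt_iff₀ (by linarith)] at hlt
    linarith
  have ha0 : ‖a‖ ≠ 0 := by rintro h0; rw [h0] at hA; linarith
  set r := (1 - α) / (2 * ‖a‖ * (2 - α))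
  have hq : 2 * ‖a‖ * r = (1 - α) / (2 - α) := by
    simp only [r]
    field_simp
  have hq1 : 2 * ‖a‖ * r ≠ 1 := by
    rw [hq, Ne, div_eq_one_iff_eq hα2.ne']
    linarith
  have hr0 : 0 < r := div_pos (by linarith) (by linarith)
  have hr1 : r < 1 := (div_lt_one (by linarith)).mpr hA
  have key := h.div_lt hu hr0 hr1 hq1
  have : (1 - α) / (2 - α) / (1 - (1 - α) / (2 - α)) = 1 - α := by field_simp; ring
  rw [hq, this] at key
  exact lt_irrefl _ key

theorem quadraticConvexityCondition_of_norm_le {a : ℂ} {u : X} {α : ℝ} (hu : ‖u‖ = 1)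
    (hα : α < 1) (ha : ‖a‖ ≤ (1 - α) / (4 - 2 * α)) :
    (∀ z ∈ ball (0 : X) 1, 1 + 2 * a * ⟪u, z⟫_ℂ ≠ 0) ∧ QuadraticConvexityCondition a u α := by
  have hinner (z : X) : ‖⟪u, z⟫_ℂ‖ ≤ ‖z‖ :=
    (norm_inner_le_norm u z).trans_eq (by rw [hu, one_mul])
  have hw {z : X} (hz : z ∈ ball (0 : X) 1) : ‖⟪u, z⟫_ℂ‖ < 1 :=
    (hinner z).trans_lt (mem_ball_zero_iff.mp hz)
  refine ⟨fun z hz => one_add_two_mul_mul_ne_zero ?_, fun z hz _ x hx _ => ?_⟩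
  · nlinarith [two_mul_norm_mul_norm_mul_lt hα ha (hw hz)]
  · nlinarith [re_conj_div_mul_lt hα ha (hw hz) (hinner x) (norm_pos_iff.mpr hx)]

end QuadraticPerturbation

theorem stmt_8_general {X : Type*} [NormedAddCommGroup X] [InnerProductSpace ℂ X] [CompleteSpace X]
    (α : ℝ) (hα1 : α < 1)
    (a : ℂ)
    (u : X) (hu : ‖u‖ = 1) :
    IsConvexMappingOfOrder (fun z : X => z + (a * (inner ℂ u z : ℂ) ^ 2) • u) α ↔
      ‖a‖ ≤ (1 - α) / (4 - 2 * α) :=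
  (isConvexMappingOfOrder_quadraticPerturbation_iff hu a α).trans
    ⟨fun h => h.2.norm_le hu hα1, quadraticConvexityCondition_of_norm_le hu hα1⟩

/-- For 0 < |a| ≤ 1/2 and ‖u‖ = 1, f(z) = z + a⟨z,u⟩²u is a biholomorphic
convex mapping of order α on B if and only if |a| ≤ (1−α)/(4−2α). -/
theorem stmt_8 {X : Type*} [NormedAddCommGroup X] [InnerProductSpace ℂ X] [CompleteSpace X]
    (α : ℝ) (hα0 : 0 ≤ α) (hα1 : α < 1)
    (a : ℂ) (ha0 : 0 < ‖a‖) (ha : ‖a‖ ≤ 1 / 2)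
    (u : X) (hu : ‖u‖ = 1) :
    IsConvexMappingOfOrder (fun z : X => z + (a * (inner ℂ u z : ℂ) ^ 2) • u) α ↔
      ‖a‖ ≤ (1 - α) / (4 - 2 * α) :=
  stmt_8_general α hα1 a u hu
end

section
/- Let g(z) = a + a₁ z + ⋯ be analytic on the unit disk U with g not identically equal to the constant a. If there exists z₀ ∈ U \ {0} such that |g(z₀)| = max_{|z| ≤ |z₀|} |g(z)|, then there exists a real number t ≥ (|g(z₀)| − |a|)/(|g(z₀)| + |a|) such that z₀ g'(z₀) = t · g(z₀). -/
/-!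
Strictness of the maximum modulus principle gives `‖g ζ‖ < ‖g z₀‖` for `‖ζ‖ < ‖z₀‖`, so
`w z = g (z z₀) / g z₀` maps the unit disk into itself, is differentiable at the boundary point
`1`, and `w 1 = 1`. Along the unit circle `‖w‖² ≤ 1` has a maximum at `1`, which forces
`w'(1) = z₀ g'(z₀) / g(z₀)` to be real. Along the radius `[0, 1)`, Schwarz–Pick bounds `‖w r‖`
by `(c + r) / (1 + c r)` with `c = ‖w 0‖`; both sides equal `1` at `r = 1`, so comparing left
derivatives there gives `w'(1) ≥ (1 - c) / (1 + c)`.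
-/

open Complex Metric Set Filter Topology
open scoped ComplexConjugate

theorem sq_norm_sub_eq (u c : ℂ) :
    ‖u - c‖ ^ 2 = ‖u‖ ^ 2 + ‖c‖ ^ 2 - 2 * (conj c * u).re := by
  simp only [Complex.sq_norm, normSq_apply, sub_re, sub_im, mul_re, conj_re, conj_im]
  ring

theorem sq_norm_one_sub_conj_mul (u c : ℂ) :
    ‖1 - conj c * u‖ ^ 2 = 1 + ‖c‖ ^ 2 * ‖u‖ ^ 2 - 2 * (conj c * u).re := by
  simp only [Complex.sq_norm, normSq_apply, sub_re, sub_im, mul_re, mul_im, one_re, one_im,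
    conj_re, conj_im]
  ring

theorem norm_sub_lt_norm_one_sub_conj_mul {u c : ℂ} (hu : ‖u‖ < 1) (hc : ‖c‖ < 1) :
    ‖u - c‖ < ‖1 - conj c * u‖ := by
  rw [← sq_lt_sq₀ (norm_nonneg _) (norm_nonneg _), sq_norm_sub_eq, sq_norm_one_sub_conj_mul]
  nlinarith [mul_pos (sub_pos.2 hc) (sub_pos.2 hu), norm_nonneg u, norm_nonneg c]

theorem norm_mul_one_add_le_of_norm_sub_le {u c : ℂ} {r : ℝ} (hr₀ : 0 ≤ r) (hr₁ : r ≤ 1)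
    (hc : ‖c‖ < 1) (h : ‖u - c‖ ≤ r * ‖1 - conj c * u‖) :
    ‖u‖ * (1 + ‖c‖ * r) ≤ ‖c‖ + r := by
  have hsq := pow_le_pow_left₀ (norm_nonneg _) h 2
  rw [mul_pow, sq_norm_sub_eq, sq_norm_one_sub_conj_mul] at hsq
  have hre : (conj c * u).re ≤ ‖c‖ * ‖u‖ := by
    simpa using re_le_norm (conj c * u)
  set U := ‖u‖
  set C := ‖c‖
  have hC : 0 ≤ C := norm_nonneg c
  have hprod : (U * (1 + C * r) - (C + r)) * (U * (1 - C * r) - (C - r)) ≤ 0 := by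
    nlinarith [mul_le_mul_of_nonneg_right hre (by nlinarith : (0 : ℝ) ≤ 1 - r ^ 2)]
  by_contra! hlt
  have h₁ : 0 < U * (1 + C * r) - (C + r) := by linarith
  have h₂ : 0 < U * (1 - C * r) - (C - r) := by
    have hCr : 0 < 1 - C * r := by nlinarith
    by_contra! h₂
    nlinarith [mul_pos h₁ hCr, mul_nonpos_of_nonpos_of_nonneg h₂ (by positivity : 0 ≤ 1 + C * r),
      mul_nonneg hr₀ (by nlinarith : (0 : ℝ) ≤ 1 - C ^ 2)]
  nlinarith [mul_pos h₁ h₂]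

theorem norm_mul_one_add_le_of_mapsTo_ball {w : ℂ → ℂ} (hw : DifferentiableOn ℂ w (ball 0 1))
    (hmaps : MapsTo w (ball 0 1) (ball 0 1)) {z : ℂ} (hz : ‖z‖ < 1) :
    ‖w z‖ * (1 + ‖w 0‖ * ‖z‖) ≤ ‖w 0‖ + ‖z‖ := by
  set c := w 0
  have hc : ‖c‖ < 1 := mem_ball_zero_iff.mp (hmaps (mem_ball_self one_pos))
  have hlt : ∀ z ∈ ball (0 : ℂ) 1, ‖w z - c‖ < ‖1 - conj c * w z‖ := fun z hz =>
    norm_sub_lt_norm_one_sub_conj_mul (mem_ball_zero_iff.mp (hmaps hz)) hc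
  have hden : ∀ z ∈ ball (0 : ℂ) 1, 1 - conj c * w z ≠ 0 := fun z hz =>
    norm_pos_iff.mp ((norm_nonneg _).trans_lt (hlt z hz))
  -- the Möbius transform moving `c` to `0` reduces the claim to the Schwarz lemma
  have hschwarz : ‖(w z - c) / (1 - conj c * w z)‖ ≤ ‖z‖ := by
    refine norm_le_norm_of_mapsTo_ball (f := fun z => (w z - c) / (1 - conj c * w z))
      ?_ (fun z hz => ?_) (by simp [c]) hz
    · exact (hw.sub_const c).div ((differentiableOn_const 1).sub (hw.const_mul _)) hden
    · rw [mem_closedBall_zero_iff, norm_div]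
      exact div_le_one_of_le₀ (hlt z hz).le (norm_nonneg _)
  rw [norm_div, div_le_iff₀ (norm_pos_iff.mpr (hden z (mem_ball_zero_iff.mpr hz)))] at hschwarz
  exact norm_mul_one_add_le_of_norm_sub_le (norm_nonneg z) hz.le hc hschwarz

theorem HasDerivAt.le_of_eventually_le_nhdsLT {f h : ℝ → ℝ} {f' h' a : ℝ}
    (hf : HasDerivAt f f' a) (hh : HasDerivAt h h' a) (heq : f a = h a)
    (hle : ∀ᶠ x in 𝓝[<] a, f x ≤ h x) : h' ≤ f' := by
  have hslope {φ : ℝ → ℝ} {φ' : ℝ} (hφ : HasDerivAt φ φ' a) :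
      Tendsto (slope φ a) (𝓝[<] a) (𝓝 φ') :=
    (hasDerivAt_iff_tendsto_slope.mp hφ).mono_left (nhdsWithin_mono _ fun _ hx => ne_of_lt hx)
  refine le_of_tendsto_of_tendsto (hslope hh) (hslope hf) ?_
  filter_upwards [hle, self_mem_nhdsWithin] with x hx (hxa : x < a)
  rw [slope_def_field, slope_def_field, heq]
  exact div_le_div_of_nonpos_of_le (sub_nonpos.2 hxa.le) (by linarith)

theorem HasDerivAt.norm_sq_comp {w : ℂ → ℂ} {γ : ℝ → ℂ} {D γ' : ℂ} {t : ℝ}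
    (hw : HasDerivAt w D (γ t)) (hγ : HasDerivAt γ γ' t) :
    HasDerivAt (fun s => ‖w (γ s)‖ ^ 2) (2 * (conj (w (γ t)) * (D * γ')).re) t := by
  simpa [Complex.inner, mul_comm] using
    ((hw.hasFDerivAt.restrictScalars ℝ).comp_hasDerivAt t hγ).norm_sq

theorem HasDerivAt.im_eq_zero_of_norm_exp_mul_I_le_one {w : ℂ → ℂ} {D : ℂ}
    (hD : HasDerivAt w D 1) (h₁ : w 1 = 1) (hcirc : ∀ θ : ℝ, ‖w (Complex.exp (θ * I))‖ ≤ 1) :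
    D.im = 0 := by
  have hγ : HasDerivAt (fun θ : ℝ => Complex.exp (θ * I)) I 0 := by
    simpa using ((hasDerivAt_id (0 : ℝ)).ofReal_comp.mul_const I).cexp
  have hD' : HasDerivAt w D (Complex.exp ((0 : ℝ) * I)) := by simpa using hD
  have hmax : IsLocalMax (fun θ : ℝ => ‖w (Complex.exp (θ * I))‖ ^ 2) 0 :=
    Eventually.of_forall fun θ => by simpa [h₁] using hcirc θ
  simpa [h₁] using hmax.hasDerivAt_eq_zero (hD'.norm_sq_comp hγ)

theorem HasDerivAt.one_sub_div_one_add_le_re {w : ℂ → ℂ} {D : ℂ}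
    (hw : DifferentiableOn ℂ w (ball 0 1)) (hmaps : MapsTo w (ball 0 1) (ball 0 1))
    (hD : HasDerivAt w D 1) (h₁ : w 1 = 1) :
    (1 - ‖w 0‖) / (1 + ‖w 0‖) ≤ D.re := by
  set C := ‖w 0‖
  have hC : 0 < 1 + C := by positivity
  have hbound : HasDerivAt (fun r : ℝ => ((C + r) / (1 + C * r)) ^ 2)
      (2 * ((1 - C) / (1 + C))) 1 := by
    refine ((((hasDerivAt_id' (1 : ℝ)).const_add C).fun_div
      (((hasDerivAt_id' (1 : ℝ)).const_mul C).const_add 1) (by positivity)).fun_pow 2).congr_deriv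
      ?_
    simp only [mul_one, one_mul, Nat.cast_ofNat, Nat.add_one_sub_one, pow_one]
    field_simp
    ring
  have hnorm : HasDerivAt (fun r : ℝ => ‖w r‖ ^ 2) (2 * D.re) 1 := by
    simpa [h₁] using (by simpa using hD : HasDerivAt w D ((1 : ℝ) : ℂ)).norm_sq_comp
      (hasDerivAt_id (1 : ℝ)).ofReal_comp
  have hle : ∀ᶠ r : ℝ in 𝓝[<] 1, ‖w r‖ ^ 2 ≤ ((C + r) / (1 + C * r)) ^ 2 := by
    filter_upwards [Ioo_mem_nhdsLT zero_lt_one] with r ⟨hr₀, hr₁⟩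
    have := norm_mul_one_add_le_of_mapsTo_ball hw hmaps (z := r)
      (by rwa [norm_real, Real.norm_of_nonneg hr₀.le])
    rw [norm_real, Real.norm_of_nonneg hr₀.le] at this
    exact pow_le_pow_left₀ (norm_nonneg _) ((le_div_iff₀ (by positivity)).mpr this) 2
  have := hnorm.le_of_eventually_le_nhdsLT hbound (by simp [h₁, add_comm C, hC.ne']) hle
  linarith

theorem norm_lt_of_forall_norm_le_on_ball {g : ℂ → ℂ} {U : Set ℂ} (hU : IsPreconnected U)
    (hUo : IsOpen U) (hg : DifferentiableOn ℂ g U) {c ζ : ℂ} {r M : ℝ} (hr : ball c r ⊆ U)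
    (hM : ∀ z ∈ ball c r, ‖g z‖ ≤ M) (hnc : ∃ z ∈ U, g z ≠ g c) (hζ : ζ ∈ ball c r) :
    ‖g ζ‖ < M := by
  refine (hM ζ hζ).lt_of_ne fun hζM => ?_
  have hmax : IsLocalMax (norm ∘ g) ζ :=
    Filter.mem_of_superset (isOpen_ball.mem_nhds hζ) fun z hz => (hM z hz).trans hζM.ge
  have hdiff : ∀ᶠ z in 𝓝 ζ, DifferentiableAt ℂ g z :=
    Filter.mem_of_superset (hUo.mem_nhds (hr hζ)) fun z hz => hg.differentiableAt (hUo.mem_nhds hz)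
  have hconst : EqOn g (fun _ => g ζ) U :=
    (hg.analyticOnNhd hUo).eqOn_of_preconnected_of_eventuallyEq analyticOnNhd_const hU (hr hζ)
      (eventually_eq_of_isLocalMax_norm hdiff hmax)
  obtain ⟨z, hz, hgz⟩ := hnc
  exact hgz ((hconst hz).trans (hconst (hr (mem_ball_self (pos_of_mem_ball hζ)))).symm)

/-- Jack's lemma: If g is analytic on U, not identically g(0), and
|g(z₀)| = max_{|z|≤|z₀|} |g(z)| for some z₀ ∈ U \ {0}, then z₀g'(z₀) = t·g(z₀) for some
real t ≥ (|g(z₀)| − |g(0)|)/(|g(z₀)| + |g(0)|). -/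
theorem stmt_9 (g : ℂ → ℂ) (hg : DifferentiableOn ℂ g (Metric.ball (0 : ℂ) 1))
    (hnc : ∃ z ∈ Metric.ball (0 : ℂ) 1, g z ≠ g 0)
    (z₀ : ℂ) (hz₀ : z₀ ∈ Metric.ball (0 : ℂ) 1) (hz₀ne : z₀ ≠ 0)
    (hmax : ∀ z : ℂ, ‖z‖ ≤ ‖z₀‖ →
      ‖g z‖ ≤ ‖g z₀‖) :
    ∃ t : ℝ,
      (‖g z₀‖ - ‖g 0‖) / (‖g z₀‖ + ‖g 0‖) ≤ t ∧
      z₀ * deriv g z₀ = (t : ℂ) * g z₀ := by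
  have hsub : ball (0 : ℂ) ‖z₀‖ ⊆ ball 0 1 := ball_subset_ball (mem_ball_zero_iff.mp hz₀).le
  have hlt : ∀ ζ, ‖ζ‖ < ‖z₀‖ → ‖g ζ‖ < ‖g z₀‖ := fun ζ hζ =>
    norm_lt_of_forall_norm_le_on_ball (convex_ball 0 1).isPreconnected isOpen_ball hg hsub
      (fun z hz => hmax z (mem_ball_zero_iff.mp hz).le) hnc (mem_ball_zero_iff.mpr hζ)
  have hA : ‖g 0‖ < ‖g z₀‖ := by simpa using hlt 0 (by rwa [norm_zero, norm_pos_iff])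
  have hM : 0 < ‖g z₀‖ := (norm_nonneg _).trans_lt hA
  have hgz₀ : g z₀ ≠ 0 := norm_pos_iff.mp hM
  set w : ℂ → ℂ := fun z => g (z * z₀) / g z₀
  have hscale : MapsTo (· * z₀) (ball 0 1) (ball 0 ‖z₀‖) := fun z hz => by
    simpa [norm_mul] using
      mul_lt_of_lt_one_left (norm_pos_iff.mpr hz₀ne) (mem_ball_zero_iff.mp hz)
  have hw : DifferentiableOn ℂ w (ball 0 1) :=
    (hg.comp (differentiable_id.mul_const z₀).differentiableOn (hscale.mono_right hsub)).div_const _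
  have hmaps : MapsTo w (ball 0 1) (ball 0 1) := fun z hz => by
    simpa [w, norm_div, div_lt_one hM] using hlt _ (mem_ball_zero_iff.mp (hscale hz))
  have hD : HasDerivAt w (deriv g z₀ * z₀ / g z₀) 1 := by
    have hg' := (hg.differentiableAt (isOpen_ball.mem_nhds hz₀)).hasDerivAt
    simpa using ((by simpa using hg' : HasDerivAt g (deriv g z₀) (1 * z₀)).comp 1
      ((hasDerivAt_id' 1).mul_const z₀)).div_const (g z₀)
  have hcirc : ∀ θ : ℝ, ‖w (Complex.exp (θ * I))‖ ≤ 1 := fun θ => by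
    simpa [w, norm_div, div_le_one hM] using hmax _ (by simp)
  have him := hD.im_eq_zero_of_norm_exp_mul_I_le_one (by simp [w, hgz₀]) hcirc
  have hre := hD.one_sub_div_one_add_le_re hw hmaps (by simp [w, hgz₀])
  refine ⟨(deriv g z₀ * z₀ / g z₀).re, ?_, ?_⟩
  · rw [show ‖w 0‖ = ‖g 0‖ / ‖g z₀‖ by simp [w]] at hre
    convert hre using 1
    field_simp
  · rw [show ((deriv g z₀ * z₀ / g z₀).re : ℂ) = deriv g z₀ * z₀ / g z₀ from ext rfl him.symm,
      div_mul_cancel₀ _ hgz₀, mul_comm]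
end

section
/- Let X be a complex Hilbert space with dim X ≥ m ≥ 2, α ∈ [0,1), and u₁,…,u_m ∈ X orthonormal. For analytic functions g₁,…,g_m on the unit disk U with g_j(0)=0, g_j'(0)=1, define Φ(g₁,…,g_m)(z) = z − Σ_j ⟨z,u_j⟩ u_j + Σ_j g_j(⟨z,u_j⟩) u_j on the unit ball B of X. Then Φ(g₁,…,g_m) satisfies ‖Df(z)⁻¹ D²f(z)(·,·)‖ ≤ 1−α for all z ∈ B if and only if each g_j satisfies |g_j''(ξ)/g_j'(ξ)| ≤ 1−α for all ξ ∈ U. -/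
/-!
`Φ(g)` acts as `g_j` on the coordinate `z_j = ⟪u_j, z⟫` and as the identity on the orthogonal
complement of the `u_j`. Hence `DΦ(z)` is the diagonal operator with entries `g_j'(z_j)`, its
inverse is diagonal with entries `1 / g_j'(z_j)`, and `D²Φ(z)(x, y) = ∑ g_j''(z_j) x_j y_j u_j`, so
`DΦ(z)⁻¹ D²Φ(z)(x, y) = ∑ (g_j'' / g_j')(z_j) x_j y_j u_j`. Testing at `z = ξ u_j`, `x = y = u_j`
gives necessity; sufficiency follows from `∑ |x_j|² |y_j|² ≤ (∑ |x_j|²)(∑ |y_j|²) ≤ ‖x‖² ‖y‖²`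
(Bessel).
-/

open scoped InnerProductSpace
open Finset Filter Topology

section Coordwise

variable {𝕜 X ι : Type*} [RCLike 𝕜] [NormedAddCommGroup X] [InnerProductSpace 𝕜 X] [Fintype ι]
  {u : ι → X}

noncomputable def coordwiseScale (u : ι → X) (c : ι → 𝕜) : X →L[𝕜] X :=
  ContinuousLinearMap.id 𝕜 X + ∑ j, (c j - 1) • (innerSL 𝕜 (u j)).smulRight (u j)

theorem coordwiseScale_apply (c : ι → 𝕜) (w : X) :
    coordwiseScale u c w = w + ∑ j, ((c j - 1) * ⟪u j, w⟫_𝕜) • u j := by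
  simp [coordwiseScale, smul_smul]

@[simp]
theorem coordwiseScale_one : coordwiseScale u (1 : ι → 𝕜) = ContinuousLinearMap.id 𝕜 X := by
  simp [coordwiseScale]

namespace Orthonormal

theorem inner_coordwiseScale (hu : Orthonormal 𝕜 u) (c : ι → 𝕜) (w : X) (k : ι) :
    ⟪u k, coordwiseScale u c w⟫_𝕜 = c k * ⟪u k, w⟫_𝕜 := by
  rw [coordwiseScale_apply, inner_add_right, hu.inner_right_fintype]
  ring

theorem coordwiseScale_sum_smul (hu : Orthonormal 𝕜 u) (c b : ι → 𝕜) :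
    coordwiseScale u c (∑ j, b j • u j) = ∑ j, (c j * b j) • u j := by
  simp only [coordwiseScale_apply, hu.inner_right_fintype, ← sum_add_distrib, ← add_smul]
  congr! 2
  ring

theorem coordwiseScale_comp (hu : Orthonormal 𝕜 u) (c d : ι → 𝕜) :
    (coordwiseScale u c).comp (coordwiseScale u d) = coordwiseScale u (c * d) := by
  ext w
  rw [ContinuousLinearMap.comp_apply, coordwiseScale_apply (c := c)]
  simp only [hu.inner_coordwiseScale]
  simp only [coordwiseScale_apply (c := d), coordwiseScale_apply (c := c * d), add_assoc,
    ← sum_add_distrib, ← add_smul, Pi.mul_apply]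
  congr! 3
  ring

theorem coordwiseScale_comp_inv (hu : Orthonormal 𝕜 u) {c : ι → 𝕜} (hc : ∀ j, c j ≠ 0) :
    (coordwiseScale u c).comp (coordwiseScale u c⁻¹) = ContinuousLinearMap.id 𝕜 X := by
  have : c * c⁻¹ = 1 := funext fun j => mul_inv_cancel₀ (hc j)
  rw [hu.coordwiseScale_comp, this, coordwiseScale_one]

theorem inv_comp_coordwiseScale (hu : Orthonormal 𝕜 u) {c : ι → 𝕜} (hc : ∀ j, c j ≠ 0) :
    (coordwiseScale u c⁻¹).comp (coordwiseScale u c) = ContinuousLinearMap.id 𝕜 X := by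
  have : c⁻¹ * c = 1 := funext fun j => inv_mul_cancel₀ (hc j)
  rw [hu.coordwiseScale_comp, this, coordwiseScale_one]

theorem norm_sum_smul_sq (hu : Orthonormal 𝕜 u) (b : ι → 𝕜) :
    ‖∑ j, b j • u j‖ ^ 2 = ∑ j, ‖b j‖ ^ 2 := by
  rw [← inner_self_eq_norm_sq (𝕜 := 𝕜), hu.inner_sum, map_sum]
  refine sum_congr rfl fun j _ => ?_
  rw [RCLike.conj_mul]
  norm_cast

theorem norm_sum_mul_inner_mul_inner_smul_le (hu : Orthonormal 𝕜 u) {a : ι → 𝕜} {K : ℝ}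
    (hK : 0 ≤ K) (ha : ∀ j, ‖a j‖ ≤ K) (x y : X) :
    ‖∑ j, (a j * (⟪u j, x⟫_𝕜 * ⟪u j, y⟫_𝕜)) • u j‖ ≤ K * (‖x‖ * ‖y‖) := by
  refine pow_le_pow_iff_left₀ (norm_nonneg _) (by positivity) two_ne_zero |>.mp ?_
  rw [hu.norm_sum_smul_sq]
  calc ∑ j, ‖a j * (⟪u j, x⟫_𝕜 * ⟪u j, y⟫_𝕜)‖ ^ 2
      ≤ ∑ j, K ^ 2 * (‖⟪u j, x⟫_𝕜‖ ^ 2 * ‖⟪u j, y⟫_𝕜‖ ^ 2) := by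
        gcongr with j
        rw [norm_mul, norm_mul, mul_pow, mul_pow]
        gcongr
        exact ha j
    _ ≤ K ^ 2 * ((∑ j, ‖⟪u j, x⟫_𝕜‖ ^ 2) * ∑ j, ‖⟪u j, y⟫_𝕜‖ ^ 2) := by
        rw [← mul_sum, sum_mul]
        gcongr with j
        exact single_le_sum (f := fun k => ‖⟪u k, y⟫_𝕜‖ ^ 2) (fun k _ => by positivity) (mem_univ j)
    _ ≤ K ^ 2 * (‖x‖ ^ 2 * ‖y‖ ^ 2) := by
        gcongr
        · exact hu.sum_inner_products_le x
        · exact hu.sum_inner_products_le y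
    _ = (K * (‖x‖ * ‖y‖)) ^ 2 := by ring

theorem sum_mul_inner_mul_inner_smul_self (hu : Orthonormal 𝕜 u) [DecidableEq ι] (a : ι → 𝕜)
    (j : ι) : ∑ k, (a k * (⟪u k, u j⟫_𝕜 * ⟪u k, u j⟫_𝕜)) • u k = a j • u j := by
  simp [orthonormal_iff_ite.mp hu]

end Orthonormal

/-- The paper's `Φ(g₁, …, g_m)`. -/
noncomputable def coordwiseMap (u : ι → X) (g : ι → 𝕜 → 𝕜) (z : X) : X :=
  z - ∑ j, ⟪u j, z⟫_𝕜 • u j + ∑ j, g j ⟪u j, z⟫_𝕜 • u j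

section Derivatives

variable {g : ι → 𝕜 → 𝕜} {z : X}

theorem hasFDerivAt_coordwiseMap (hg : ∀ j, DifferentiableAt 𝕜 (g j) ⟪u j, z⟫_𝕜) :
    HasFDerivAt (coordwiseMap u g) (coordwiseScale u fun j => deriv (g j) ⟪u j, z⟫_𝕜) z := by
  have hcoord : ∀ j, HasFDerivAt (fun w => g j ⟪u j, w⟫_𝕜 • u j)
      ((deriv (g j) ⟪u j, z⟫_𝕜 • innerSL 𝕜 (u j)).smulRight (u j)) z := fun j =>
    ((hg j).hasDerivAt.comp_hasFDerivAt z (innerSL 𝕜 (u j)).hasFDerivAt).smul_const (u j)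
  refine (((hasFDerivAt_id z).fun_sub (HasFDerivAt.fun_sum fun j _ =>
    ((innerSL 𝕜 (u j)).hasFDerivAt.smul_const (u j)))).fun_add
    (HasFDerivAt.fun_sum fun j _ => hcoord j)).congr_fderiv ?_
  ext w
  simp only [coordwiseScale_apply, add_apply, sub_apply, ContinuousLinearMap.id_apply,
    _root_.sum_apply, ContinuousLinearMap.smulRight_apply, smul_apply, innerSL_apply_apply,
    smul_eq_mul]
  rw [sub_add_eq_add_sub, add_sub_assoc, ← sum_sub_distrib]
  simp only [← sub_smul]
  congr! 3
  ring

theorem fderiv_coordwiseMap (hg : ∀ j, DifferentiableAt 𝕜 (g j) ⟪u j, z⟫_𝕜) :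
    fderiv 𝕜 (coordwiseMap u g) z = coordwiseScale u fun j => deriv (g j) ⟪u j, z⟫_𝕜 :=
  (hasFDerivAt_coordwiseMap hg).fderiv

theorem fderiv_fderiv_coordwiseMap_apply
    (hg : ∀ j, ∀ᶠ ξ in 𝓝 ⟪u j, z⟫_𝕜, DifferentiableAt 𝕜 (g j) ξ)
    (hg' : ∀ j, DifferentiableAt 𝕜 (deriv (g j)) ⟪u j, z⟫_𝕜) (x y : X) :
    fderiv 𝕜 (fderiv 𝕜 (coordwiseMap u g)) z x y =
      ∑ j, (deriv (deriv (g j)) ⟪u j, z⟫_𝕜 * (⟪u j, x⟫_𝕜 * ⟪u j, y⟫_𝕜)) • u j := by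
  have hfd : fderiv 𝕜 (coordwiseMap u g) =ᶠ[𝓝 z]
      fun w => coordwiseScale u fun j => deriv (g j) ⟪u j, w⟫_𝕜 := by
    have hnear : ∀ᶠ w in 𝓝 z, ∀ j, DifferentiableAt 𝕜 (g j) ⟪u j, w⟫_𝕜 :=
      eventually_all.2 fun j => (innerSL 𝕜 (u j)).continuous.continuousAt.eventually (hg j)
    filter_upwards [hnear] with w hw using fderiv_coordwiseMap hw
  have hscale : HasFDerivAt (fun w => coordwiseScale u fun j => deriv (g j) ⟪u j, w⟫_𝕜)
      (∑ j, (deriv (deriv (g j)) ⟪u j, z⟫_𝕜 • innerSL 𝕜 (u j)).smulRight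
        ((innerSL 𝕜 (u j)).smulRight (u j))) z := by
    unfold coordwiseScale
    have hc : ∀ j, HasFDerivAt (fun w => deriv (g j) ⟪u j, w⟫_𝕜 - 1)
        (deriv (deriv (g j)) ⟪u j, z⟫_𝕜 • innerSL 𝕜 (u j)) z := fun j =>
      ((hg' j).hasDerivAt.comp_hasFDerivAt z (innerSL 𝕜 (u j)).hasFDerivAt).sub_const 1
    simpa using (hasFDerivAt_const (ContinuousLinearMap.id 𝕜 X) z).fun_add
      (HasFDerivAt.fun_sum fun j _ => (hc j).smul_const ((innerSL 𝕜 (u j)).smulRight (u j)))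
  rw [(hscale.congr_of_eventuallyEq hfd).fderiv]
  simp [smul_smul, mul_assoc]

theorem Orthonormal.comp_fderiv_fderiv_coordwiseMap_apply (hu : Orthonormal 𝕜 u)
    (hg : ∀ j, ∀ᶠ ξ in 𝓝 ⟪u j, z⟫_𝕜, DifferentiableAt 𝕜 (g j) ξ)
    (hg' : ∀ j, DifferentiableAt 𝕜 (deriv (g j)) ⟪u j, z⟫_𝕜)
    (hderiv : ∀ j, deriv (g j) ⟪u j, z⟫_𝕜 ≠ 0) {G : X →L[𝕜] X}
    (hG : G.comp (fderiv 𝕜 (coordwiseMap u g) z) = ContinuousLinearMap.id 𝕜 X) (x y : X) :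
    G (fderiv 𝕜 (fderiv 𝕜 (coordwiseMap u g)) z x y) =
      ∑ j, (deriv (deriv (g j)) ⟪u j, z⟫_𝕜 / deriv (g j) ⟪u j, z⟫_𝕜 *
        (⟪u j, x⟫_𝕜 * ⟪u j, y⟫_𝕜)) • u j := by
  set c : ι → 𝕜 := fun j => deriv (g j) ⟪u j, z⟫_𝕜
  have hG_eq : G = coordwiseScale u c⁻¹ := by
    rw [fderiv_coordwiseMap fun j => (hg j).self_of_nhds] at hG
    calc G = G.comp ((coordwiseScale u c).comp (coordwiseScale u c⁻¹)) := by
          rw [hu.coordwiseScale_comp_inv hderiv, ContinuousLinearMap.comp_id]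
      _ = coordwiseScale u c⁻¹ := by
          rw [← ContinuousLinearMap.comp_assoc, hG, ContinuousLinearMap.id_comp]
  rw [hG_eq, fderiv_fderiv_coordwiseMap_apply hg hg', hu.coordwiseScale_sum_smul]
  simp only [c, Pi.inv_apply, div_eq_inv_mul, mul_assoc]

end Derivatives

theorem inner_mem_ball_zero {v z : X} {r : ℝ} (hv : ‖v‖ ≤ 1) (hz : z ∈ Metric.ball 0 r) :
    ⟪v, z⟫_𝕜 ∈ Metric.ball (0 : 𝕜) r := by
  rw [mem_ball_zero_iff] at hz ⊢
  calc ‖⟪v, z⟫_𝕜‖ ≤ ‖v‖ * ‖z‖ := norm_inner_le_norm _ _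
    _ ≤ 1 * ‖z‖ := by gcongr
    _ < r := by rwa [one_mul]

end Coordwise

section Holomorphic

variable {X ι : Type*} [NormedAddCommGroup X] [InnerProductSpace ℂ X] [Fintype ι] {u : ι → X}
  {g : ι → ℂ → ℂ} {U : Set ℂ} {z : X}

theorem fderiv_coordwiseMap_of_differentiableOn (hU : IsOpen U)
    (hg : ∀ j, DifferentiableOn ℂ (g j) U) (hz : ∀ j, ⟪u j, z⟫_ℂ ∈ U) :
    fderiv ℂ (coordwiseMap u g) z = coordwiseScale u fun j => deriv (g j) ⟪u j, z⟫_ℂ :=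
  fderiv_coordwiseMap fun j => (hg j).differentiableAt (hU.mem_nhds (hz j))

theorem Orthonormal.comp_fderiv_fderiv_coordwiseMap_apply_of_differentiableOn
    (hu : Orthonormal ℂ u) (hU : IsOpen U) (hg : ∀ j, DifferentiableOn ℂ (g j) U)
    (hz : ∀ j, ⟪u j, z⟫_ℂ ∈ U) (hderiv : ∀ j, deriv (g j) ⟪u j, z⟫_ℂ ≠ 0) {G : X →L[ℂ] X}
    (hG : G.comp (fderiv ℂ (coordwiseMap u g) z) = ContinuousLinearMap.id ℂ X) (x y : X) :
    G (fderiv ℂ (fderiv ℂ (coordwiseMap u g)) z x y) =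
      ∑ j, (deriv (deriv (g j)) ⟪u j, z⟫_ℂ / deriv (g j) ⟪u j, z⟫_ℂ *
        (⟪u j, x⟫_ℂ * ⟪u j, y⟫_ℂ)) • u j :=
  hu.comp_fderiv_fderiv_coordwiseMap_apply
    (fun j => eventually_of_mem (hU.mem_nhds (hz j)) fun _ hξ =>
      (hg j).differentiableAt (hU.mem_nhds hξ))
    (fun j => ((hg j).deriv hU).differentiableAt (hU.mem_nhds (hz j))) hderiv hG x y

end Holomorphic

theorem stmt_13_general {X : Type*} [NormedAddCommGroup X] [InnerProductSpace ℂ X]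
    (m : ℕ) (α : ℝ) (hα1 : α < 1)
    (u : Fin m → X) (hu : Orthonormal ℂ u)
    (g : Fin m → ℂ → ℂ)
    (hg : ∀ j, DifferentiableOn ℂ (g j) (Metric.ball (0 : ℂ) 1))
    (hg' : ∀ j, ∀ ξ ∈ Metric.ball (0 : ℂ) 1, deriv (g j) ξ ≠ 0)
    (f : X → X)
    (hf : f = fun z => z - ∑ j : Fin m, (inner ℂ (u j) z : ℂ) • u j
      + ∑ j : Fin m, g j (inner ℂ (u j) z : ℂ) • u j) :
    (∀ z ∈ Metric.ball (0 : X) 1,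
      ∀ G : X →L[ℂ] X,
        (fderiv ℂ f z).comp G = ContinuousLinearMap.id ℂ X →
        G.comp (fderiv ℂ f z) = ContinuousLinearMap.id ℂ X →
        ∀ x y : X, ‖G (fderiv ℂ (fderiv ℂ f) z x y)‖ ≤ (1 - α) * (‖x‖ * ‖y‖)) ↔
    (∀ j, ∀ ξ ∈ Metric.ball (0 : ℂ) 1,
      ‖deriv (deriv (g j)) ξ / deriv (g j) ξ‖ ≤ 1 - α) := by
  change f = coordwiseMap u g at hf
  subst hf
  have hcoord : ∀ z ∈ Metric.ball (0 : X) 1, ∀ j, ⟪u j, z⟫_ℂ ∈ Metric.ball (0 : ℂ) 1 :=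
    fun z hz j => inner_mem_ball_zero (hu.1 j).le hz
  have hsecond := fun z (hz : z ∈ Metric.ball (0 : X) 1) (G : X →L[ℂ] X) =>
    hu.comp_fderiv_fderiv_coordwiseMap_apply_of_differentiableOn (G := G) Metric.isOpen_ball hg
      (hcoord z hz) fun j => hg' j _ (hcoord z hz j)
  constructor
  · intro h j ξ hξ
    classical
    have hz : ξ • u j ∈ Metric.ball (0 : X) 1 := by
      rwa [mem_ball_zero_iff, norm_smul, hu.1 j, mul_one, ← mem_ball_zero_iff]
    have hzj : ⟪u j, ξ • u j⟫_ℂ = ξ := by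
      rw [inner_smul_right, inner_self_eq_one_of_norm_eq_one (hu.1 j), mul_one]
    set c : Fin m → ℂ := fun k => deriv (g k) ⟪u k, ξ • u j⟫_ℂ
    have hc : ∀ k, c k ≠ 0 := fun k => hg' k _ (hcoord _ hz k)
    have hfd := fderiv_coordwiseMap_of_differentiableOn Metric.isOpen_ball hg (hcoord _ hz)
    have hG : (coordwiseScale u c⁻¹).comp (fderiv ℂ (coordwiseMap u g) (ξ • u j)) =
        ContinuousLinearMap.id ℂ X := by
      rw [hfd]; exact hu.inv_comp_coordwiseScale hc
    have := h _ hz _ (by rw [hfd]; exact hu.coordwiseScale_comp_inv hc) hG (u j) (u j)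
    rwa [hsecond _ hz _ hG, hu.sum_mul_inner_mul_inner_smul_self, norm_smul, hu.1 j, hzj,
      mul_one, mul_one, mul_one] at this
  · intro h z hz G _ hG x y
    rw [hsecond z hz G hG]
    exact hu.norm_sum_mul_inner_mul_inner_smul_le (by linarith) (fun j => h j _ (hcoord z hz j)) x y

/-- For orthonormal u₁,…,u_m and locally univalent analytic g_j on U with
g_j(0)=0, g_j'(0)=1, the mapping Φ(g₁,…,g_m)(z) = z − Σ⟨z,u_j⟩u_j + Σ g_j(⟨z,u_j⟩)u_j
satisfies ‖Df(z)⁻¹D²f(z)(·,·)‖ ≤ 1−α for all z ∈ B iff |g_j''/g_j'| ≤ 1−α on U for all j. -/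
theorem stmt_13 {X : Type*} [NormedAddCommGroup X] [InnerProductSpace ℂ X] [CompleteSpace X]
    (m : ℕ) (hm : 2 ≤ m) (α : ℝ) (hα0 : 0 ≤ α) (hα1 : α < 1)
    (u : Fin m → X) (hu : Orthonormal ℂ u)
    (g : Fin m → ℂ → ℂ)
    (hg : ∀ j, DifferentiableOn ℂ (g j) (Metric.ball (0 : ℂ) 1))
    (hg0 : ∀ j, g j 0 = 0) (hg1 : ∀ j, deriv (g j) 0 = 1)
    (hg' : ∀ j, ∀ ξ ∈ Metric.ball (0 : ℂ) 1, deriv (g j) ξ ≠ 0)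
    (f : X → X)
    (hf : f = fun z => z - ∑ j : Fin m, (inner ℂ (u j) z : ℂ) • u j
      + ∑ j : Fin m, g j (inner ℂ (u j) z : ℂ) • u j) :
    (∀ z ∈ Metric.ball (0 : X) 1,
      ∀ G : X →L[ℂ] X,
        (fderiv ℂ f z).comp G = ContinuousLinearMap.id ℂ X →
        G.comp (fderiv ℂ f z) = ContinuousLinearMap.id ℂ X →
        ∀ x y : X, ‖G (fderiv ℂ (fderiv ℂ f) z x y)‖ ≤ (1 - α) * (‖x‖ * ‖y‖)) ↔
    (∀ j, ∀ ξ ∈ Metric.ball (0 : ℂ) 1,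
      ‖deriv (deriv (g j)) ξ / deriv (g j) ξ‖ ≤ 1 - α) :=
  stmt_13_general m α hα1 u hu g hg hg' f hf
end

section
/- Let X be a complex Hilbert space with dim X ≥ m ≥ 2, α ∈ [0,1), u₁,…,u_m ∈ X orthonormal, and g₁,…,g_m locally univalent analytic on the unit disk with g_j(0)=0, g_j'(0)=1. If f(z) = z − Σ_j ⟨z,u_j⟩ u_j + Σ_j g_j(⟨z,u_j⟩) u_j is a biholomorphic convex mapping of order α on the unit ball B of X, then each g_j is a convex function of order α on the unit disk, i.e., Re(1 + ξ g_j''(ξ)/g_j'(ξ)) > α for all ξ ∈ U. -/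
/-! Along the axis `ℂ uⱼ` the map `f = Φ(g₁, …, g_m)` is `ξ uⱼ ↦ gⱼ(ξ) uⱼ`. At `z = ξ uⱼ` the
other coordinates vanish, so `gₖ'(0) = 1` gives `Df(z) = 1 + (gⱼ'(ξ) - 1) Pⱼ` with `Pⱼ` the
orthogonal projection onto `ℂ uⱼ`, and since `Pⱼ` is idempotent the inverse is
`1 + (gⱼ'(ξ)⁻¹ - 1) Pⱼ`. Moreover `D²f(z)(z, z) = gⱼ''(ξ) ξ² uⱼ`. Testing convexity at `z` in the
tangent direction `x = i z` gives `α |ξ|² < |ξ|² (1 + Re(ξ gⱼ''(ξ) / gⱼ'(ξ)))`. -/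

open Metric Filter Topology InnerProductSpace ComplexConjugate

theorem IsIdempotentElem.one_add_smul_mul_one_add_smul_s14 {R A : Type*} [CommRing R] [Ring A]
    [Algebra R A] {p : A} (hp : IsIdempotentElem p) (a b : R) :
    (1 + a • p) * (1 + b • p) = 1 + (a + b + a * b) • p := by
  simp only [mul_add, add_mul, one_mul, mul_one, smul_mul_smul_comm, hp.eq, add_smul]
  abel

theorem IsIdempotentElem.one_add_smul_mul_one_add_inv_sub_one_smul {K A : Type*} [Field K]
    [Ring A] [Algebra K A] {p : A} (hp : IsIdempotentElem p) {d : K} (hd : d ≠ 0) :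
    (1 + (d - 1) • p) * (1 + (d⁻¹ - 1) • p) = 1 := by
  rw [hp.one_add_smul_mul_one_add_smul_s14]
  convert add_zero (1 : A)
  rw [show d - 1 + (d⁻¹ - 1) + (d - 1) * (d⁻¹ - 1) = 0 by field_simp; ring, zero_smul]

theorem IsIdempotentElem.one_add_inv_sub_one_smul_mul_one_add_smul {K A : Type*} [Field K]
    [Ring A] [Algebra K A] {p : A} (hp : IsIdempotentElem p) {d : K} (hd : d ≠ 0) :
    (1 + (d⁻¹ - 1) • p) * (1 + (d - 1) • p) = 1 := by
  simpa using hp.one_add_smul_mul_one_add_inv_sub_one_smul (inv_ne_zero hd)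

theorem one_add_smul_rankOne_self_apply_smul {𝕜 E : Type*} [RCLike 𝕜] [NormedAddCommGroup E]
    [InnerProductSpace 𝕜 E] {v : E} (hv : ‖v‖ = 1) (a c : 𝕜) :
    (1 + a • rankOne 𝕜 v v) (c • v) = ((1 + a) * c) • v := by
  simp only [add_apply, one_apply_eq_self, smul_apply, rankOne_apply, inner_smul_right,
    inner_self_eq_one_of_norm_eq_one hv, mul_one, smul_smul, add_mul, one_mul, add_smul]

theorem re_conj_mul_mul_self (ξ c d : ℂ) :
    (conj (d⁻¹ * (c * ξ * ξ)) * ξ).re = ‖ξ‖ ^ 2 * (ξ * c / d).re := by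
  calc (conj (d⁻¹ * (c * ξ * ξ)) * ξ).re = (d⁻¹ * (c * ξ * ξ) * conj ξ).re := by
        rw [← Complex.conj_re, map_mul, Complex.conj_conj]
    _ = (ξ * c / d * (ξ * conj ξ)).re := by congr 1; ring
    _ = ‖ξ‖ ^ 2 * (ξ * c / d).re := by
        rw [Complex.mul_conj, Complex.normSq_eq_norm_sq, Complex.re_mul_ofReal, mul_comm]

theorem lt_re_one_add_mul_div {α : ℝ} {ξ c d : ℂ} (hξ : ξ ≠ 0)
    (h : α * ‖ξ‖ ^ 2 < ‖ξ‖ ^ 2 + (conj (d⁻¹ * (c * ξ * ξ)) * ξ).re) :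
    α < (1 + ξ * c / d).re := by
  have hpos : 0 < ‖ξ‖ ^ 2 := by positivity
  rw [re_conj_mul_mul_self, ← mul_one_add, mul_comm α] at h
  rw [Complex.add_re, Complex.one_re]
  exact lt_of_mul_lt_mul_left h hpos.le

theorem inner_mem_ball_zero_one {X : Type*} [NormedAddCommGroup X] [InnerProductSpace ℂ X]
    {v w : X} (hv : ‖v‖ ≤ 1) (hw : w ∈ ball (0 : X) 1) : inner ℂ v w ∈ ball (0 : ℂ) 1 := by
  rw [mem_ball_zero_iff] at hw ⊢
  calc ‖inner ℂ v w‖ ≤ ‖v‖ * ‖w‖ := norm_inner_le_norm v w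
    _ ≤ 1 * ‖w‖ := by gcongr
    _ < 1 := by rwa [one_mul]

theorem IsConvexMappingOfOrder.lt_norm_sq_add_re_inner {X : Type*} [NormedAddCommGroup X]
    [InnerProductSpace ℂ X] [CompleteSpace X] {f : X → X} {α : ℝ}
    (hf : IsConvexMappingOfOrder f α) {z : X} (hz : z ∈ ball 0 1) (hz0 : z ≠ 0) {G : X →L[ℂ] X}
    (hG₁ : fderiv ℂ f z * G = 1) (hG₂ : G * fderiv ℂ f z = 1) :
    α * ‖z‖ ^ 2 < ‖z‖ ^ 2 + (inner ℂ (G (fderiv ℂ (fderiv ℂ f) z z z)) z).re := by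
  -- `x = I • z` is tangent to the sphere and `D²f(z)(I z, I z) = -D²f(z)(z, z)`
  have h := hf.2.2.2.2 z hz hz0 (Complex.I • z) (smul_ne_zero Complex.I_ne_zero hz0)
    (by simp [← Complex.ofReal_pow]) G hG₁ hG₂
  simpa [norm_smul] using h

section ExtensionMap

variable {X : Type*} [NormedAddCommGroup X] [InnerProductSpace ℂ X]
  {ι : Type*} [Fintype ι] (u : ι → X) (g : ι → ℂ → ℂ)

/-- `Φ(g₁, …, g_m)` in the paper. -/
noncomputable def extensionMap (z : X) : X :=
  z - ∑ k, inner ℂ (u k) z • u k + ∑ k, g k (inner ℂ (u k) z) • u k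

theorem hasFDerivAt_extensionMap {w : X}
    (hg : ∀ k, DifferentiableAt ℂ (g k) (inner ℂ (u k) w)) :
    HasFDerivAt (extensionMap u g)
      (1 + ∑ k, (deriv (g k) (inner ℂ (u k) w) - 1) • rankOne ℂ (u k) (u k)) w := by
  have hproj : HasFDerivAt (fun z : X => ∑ k, inner ℂ (u k) z • u k)
      (∑ k, rankOne ℂ (u k) (u k)) w :=
    HasFDerivAt.fun_sum fun k _ => (innerSL ℂ (u k)).hasFDerivAt.smul_const (u k)
  have hcomp : HasFDerivAt (fun z : X => ∑ k, g k (inner ℂ (u k) z) • u k)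
      (∑ k, deriv (g k) (inner ℂ (u k) w) • rankOne ℂ (u k) (u k)) w := by
    refine HasFDerivAt.fun_sum fun k _ => ?_
    convert ((hg k).hasDerivAt.comp_hasFDerivAt w
      (innerSL ℂ (u k)).hasFDerivAt).smul_const (u k) using 1
    · rfl
    · ext y
      simp [smul_smul]
  convert ((hasFDerivAt_id w).sub hproj).add hcomp using 1
  · rfl
  simp only [sub_smul, one_smul, Finset.sum_sub_distrib, ContinuousLinearMap.one_def]
  abel

theorem fderiv_fderiv_extensionMap_apply {z : X}
    (hg : ∀ k, ∀ᶠ ζ in 𝓝 (inner ℂ (u k) z), DifferentiableAt ℂ (g k) ζ) (x y : X) :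
    fderiv ℂ (fderiv ℂ (extensionMap u g)) z x y =
      ∑ k, (deriv (deriv (g k)) (inner ℂ (u k) z) * inner ℂ (u k) x * inner ℂ (u k) y) • u k := by
  have hnear : ∀ᶠ w in 𝓝 z, ∀ k, DifferentiableAt ℂ (g k) (inner ℂ (u k) w) :=
    eventually_all.2 fun k =>
      ((innerSL ℂ (u k)).continuous.tendsto z).eventually (hg k)
  have hfderiv : fderiv ℂ (extensionMap u g) =ᶠ[𝓝 z]
      fun w => 1 + ∑ k, (deriv (g k) (inner ℂ (u k) w) - 1) • rankOne ℂ (u k) (u k) :=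
    hnear.mono fun w hw => (hasFDerivAt_extensionMap u g hw).fderiv
  have hderiv2 : ∀ k, HasDerivAt (deriv (g k)) (deriv (deriv (g k)) (inner ℂ (u k) z))
      (inner ℂ (u k) z) := fun k =>
    (Complex.analyticAt_iff_eventually_differentiableAt.2 (hg k)).deriv.differentiableAt.hasDerivAt
  have hF : HasFDerivAt
      (fun w => 1 + ∑ k, (deriv (g k) (inner ℂ (u k) w) - 1) • rankOne ℂ (u k) (u k))
      (∑ k, (deriv (deriv (g k)) (inner ℂ (u k) z) • innerSL ℂ (u k)).smulRight
        (rankOne ℂ (u k) (u k))) z :=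
    (HasFDerivAt.fun_sum fun k _ => (((hderiv2 k).sub_const 1).comp_hasFDerivAt z
      (innerSL ℂ (u k)).hasFDerivAt).smul_const _).const_add 1
  rw [hfderiv.fderiv_eq, hF.fderiv]
  simp [smul_smul, mul_assoc]

theorem fderiv_extensionMap_smul_of_orthonormal (hu : Orthonormal ℂ u) (j : ι) (ξ : ℂ)
    (hg : ∀ k, DifferentiableAt ℂ (g k) (inner ℂ (u k) (ξ • u j)))
    (hg1 : ∀ k, k ≠ j → deriv (g k) 0 = 1) :
    fderiv ℂ (extensionMap u g) (ξ • u j) = 1 + (deriv (g j) ξ - 1) • rankOne ℂ (u j) (u j) := by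
  rw [(hasFDerivAt_extensionMap u g hg).fderiv, Finset.sum_eq_single j]
  · simp [hu.1 j]
  · intro k _ hkj
    simp [hu.inner_eq_zero hkj, hg1 k hkj]
  · simp

theorem fderiv_fderiv_extensionMap_smul_of_orthonormal (hu : Orthonormal ℂ u) (j : ι) (ξ : ℂ)
    (hg : ∀ k, ∀ᶠ ζ in 𝓝 (inner ℂ (u k) (ξ • u j)), DifferentiableAt ℂ (g k) ζ) :
    fderiv ℂ (fderiv ℂ (extensionMap u g)) (ξ • u j) (ξ • u j) (ξ • u j) =
      (deriv (deriv (g j)) ξ * ξ * ξ) • u j := by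
  rw [fderiv_fderiv_extensionMap_apply u g hg, Finset.sum_eq_single j]
  · simp [hu.1 j]
  · intro k _ hkj
    simp [hu.inner_eq_zero hkj]
  · simp

theorem IsConvexMappingOfOrder.lt_re_one_add_of_extensionMap [CompleteSpace X]
    (hu : Orthonormal ℂ u) {α : ℝ} (hconv : IsConvexMappingOfOrder (extensionMap u g) α)
    {j : ι} {ξ : ℂ} (hξ0 : ξ ≠ 0) (hz : ξ • u j ∈ ball (0 : X) 1)
    (hg : ∀ k, ∀ᶠ ζ in 𝓝 (inner ℂ (u k) (ξ • u j)), DifferentiableAt ℂ (g k) ζ)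
    (hg1 : ∀ k, k ≠ j → deriv (g k) 0 = 1) (hd : deriv (g j) ξ ≠ 0) :
    α < (1 + ξ * deriv (deriv (g j)) ξ / deriv (g j) ξ).re := by
  have hP : IsIdempotentElem (rankOne ℂ (u j) (u j)) := isIdempotentElem_rankOne_self (hu.1 j)
  have hDf := fderiv_extensionMap_smul_of_orthonormal u g hu j ξ
    (fun k => (hg k).self_of_nhds) hg1
  have key := hconv.lt_norm_sq_add_re_inner hz (smul_ne_zero hξ0 (hu.ne_zero j))
    (G := 1 + ((deriv (g j) ξ)⁻¹ - 1) • rankOne ℂ (u j) (u j))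
    (hDf ▸ hP.one_add_smul_mul_one_add_inv_sub_one_smul hd)
    (hDf ▸ hP.one_add_inv_sub_one_smul_mul_one_add_smul hd)
  rw [fderiv_fderiv_extensionMap_smul_of_orthonormal u g hu j ξ hg,
    one_add_smul_rankOne_self_apply_smul (hu.1 j), add_sub_cancel, norm_smul, hu.1 j, mul_one,
    inner_smul_left, inner_smul_right, inner_self_eq_one_of_norm_eq_one (hu.1 j), mul_one] at key
  exact lt_re_one_add_mul_div hξ0 key

end ExtensionMap

theorem stmt_14_general {X : Type*} [NormedAddCommGroup X] [InnerProductSpace ℂ X] [CompleteSpace X]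
    (m : ℕ) (α : ℝ) (hα1 : α < 1)
    (u : Fin m → X) (hu : Orthonormal ℂ u)
    (g : Fin m → ℂ → ℂ)
    (hg : ∀ j, DifferentiableOn ℂ (g j) (Metric.ball (0 : ℂ) 1))
    (hg1 : ∀ j, deriv (g j) 0 = 1)
    (hg' : ∀ j, ∀ ξ ∈ Metric.ball (0 : ℂ) 1, deriv (g j) ξ ≠ 0)
    (f : X → X)
    (hf : f = fun z => z - ∑ j : Fin m, (inner ℂ (u j) z : ℂ) • u j
      + ∑ j : Fin m, g j (inner ℂ (u j) z : ℂ) • u j)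
    (hconv : IsConvexMappingOfOrder f α) :
    ∀ j, ∀ ξ ∈ Metric.ball (0 : ℂ) 1,
      α < (1 + ξ * deriv (deriv (g j)) ξ / deriv (g j) ξ).re := by
  intro j ξ hξ
  rcases eq_or_ne ξ 0 with rfl | hξ0
  · simpa using hα1
  change f = extensionMap u g at hf
  subst hf
  have hz : ξ • u j ∈ ball (0 : X) 1 := by simpa [norm_smul, hu.1 j] using hξ
  exact hconv.lt_re_one_add_of_extensionMap u g hu hξ0 hz
    (fun k => (hg k).eventually_differentiableAt
      (isOpen_ball.mem_nhds (inner_mem_ball_zero_one (hu.1 k).le hz)))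
    (fun k _ => hg1 k) (hg' j ξ hξ)

/-- If f = Φ(g₁,…,g_m) is a biholomorphic convex mapping of order α on B,
then each g_j is a convex function of order α on the unit disk. -/
theorem stmt_14 {X : Type*} [NormedAddCommGroup X] [InnerProductSpace ℂ X] [CompleteSpace X]
    (m : ℕ) (hm : 2 ≤ m) (α : ℝ) (hα0 : 0 ≤ α) (hα1 : α < 1)
    (u : Fin m → X) (hu : Orthonormal ℂ u)
    (g : Fin m → ℂ → ℂ)
    (hg : ∀ j, DifferentiableOn ℂ (g j) (Metric.ball (0 : ℂ) 1))
    (hg0 : ∀ j, g j 0 = 0) (hg1 : ∀ j, deriv (g j) 0 = 1)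
    (hg' : ∀ j, ∀ ξ ∈ Metric.ball (0 : ℂ) 1, deriv (g j) ξ ≠ 0)
    (f : X → X)
    (hf : f = fun z => z - ∑ j : Fin m, (inner ℂ (u j) z : ℂ) • u j
      + ∑ j : Fin m, g j (inner ℂ (u j) z : ℂ) • u j)
    (hconv : IsConvexMappingOfOrder f α) :
    ∀ j, ∀ ξ ∈ Metric.ball (0 : ℂ) 1,
      α < (1 + ξ * deriv (deriv (g j)) ξ / deriv (g j) ξ).re :=
  stmt_14_general m α hα1 u hu g hg hg1 hg' f hf hconv
end

section
/- Let α ∈ [0,1) and define h(ξ) = (1 − (1−ξ)^{2α−1})/(2α−1) if α ≠ 1/2 and h(ξ) = −log(1−ξ) if α = 1/2, for ξ in the unit disk U. Then Re(1 + ξ h''(ξ)/h'(ξ)) > α for all ξ ∈ U (h is convex of order α), but for any complex Hilbert space X with dim X ≥ 2 and orthonormal u₁,…,u_m (m ≥ 2), the mapping F(z) = z − Σ_j ⟨z,u_j⟩ u_j + Σ_j h(⟨z,u_j⟩) u_j is NOT a biholomorphic convex mapping of order α on the unit ball B of X. -/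
open Complex InnerProductSpace Topology

section OrthoExtension

variable {X : Type*} [NormedAddCommGroup X] [InnerProductSpace ℂ X] {ι : Type*} [Fintype ι]

noncomputable def orthoDiag (u : ι → X) (d : ι → ℂ) : X →L[ℂ] X :=
  ContinuousLinearMap.id ℂ X + ∑ j, (d j - 1) • rankOne ℂ (u j) (u j)

lemma orthoDiag_apply (u : ι → X) (d : ι → ℂ) (x : X) :
    orthoDiag u d x = x + ∑ j, ((d j - 1) * ⟪u j, x⟫_ℂ) • u j := by
  simp [orthoDiag, smul_smul]

lemma orthoDiag_sum_smul {u : ι → X} (hu : Orthonormal ℂ u) (d c : ι → ℂ) :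
    orthoDiag u d (∑ j, c j • u j) = ∑ j, (d j * c j) • u j := by
  simp only [orthoDiag_apply, hu.inner_right_fintype, ← Finset.sum_add_distrib, ← add_smul]
  congr! 2
  ring

lemma inner_orthoDiag {u : ι → X} (hu : Orthonormal ℂ u) (d : ι → ℂ) (x : X) (i : ι) :
    ⟪u i, orthoDiag u d x⟫_ℂ = d i * ⟪u i, x⟫_ℂ := by
  classical
  simp only [orthoDiag_apply, inner_add_right, inner_sum, inner_smul_right,
    orthonormal_iff_ite.mp hu, mul_ite, mul_one, mul_zero, Finset.sum_ite_eq, Finset.mem_univ,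
    if_true]
  ring

lemma orthoDiag_comp_orthoDiag {u : ι → X} (hu : Orthonormal ℂ u) (d e : ι → ℂ) :
    (orthoDiag u d).comp (orthoDiag u e) = orthoDiag u (d * e) := by
  ext x
  rw [ContinuousLinearMap.comp_apply, orthoDiag_apply u d]
  simp only [inner_orthoDiag hu]
  simp only [orthoDiag_apply u e, orthoDiag_apply u (d * e), Pi.mul_apply,
    add_assoc, ← Finset.sum_add_distrib, ← add_smul]
  congr! 3
  ring

lemma orthoDiag_one (u : ι → X) : orthoDiag u 1 = ContinuousLinearMap.id ℂ X := by
  simp [orthoDiag]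

noncomputable def orthoExtension (u : ι → X) (h : ℂ → ℂ) (z : X) : X :=
  z - ∑ j, ⟪u j, z⟫_ℂ • u j + ∑ j, h ⟪u j, z⟫_ℂ • u j

lemma hasFDerivAt_orthoExtension (u : ι → X) {h h' : ℂ → ℂ} {z : X}
    (hh : ∀ j, HasDerivAt h (h' ⟪u j, z⟫_ℂ) ⟪u j, z⟫_ℂ) :
    HasFDerivAt (orthoExtension u h) (orthoDiag u fun j => h' ⟪u j, z⟫_ℂ) z := by
  have hproj : HasFDerivAt (fun w => ∑ j, ⟪u j, w⟫_ℂ • u j)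
      (∑ j, rankOne ℂ (u j) (u j)) z := by
    convert (∑ j, rankOne ℂ (u j) (u j)).hasFDerivAt using 1
    ext w
    simp
  have hcoord : ∀ j, HasFDerivAt (fun w => h ⟪u j, w⟫_ℂ • u j)
      (h' ⟪u j, z⟫_ℂ • rankOne ℂ (u j) (u j)) z := by
    intro j
    refine (((hh j).comp_hasFDerivAt z (innerSL ℂ (u j)).hasFDerivAt).smul_const
      (u j)).congr_fderiv ?_
    ext w
    simp [smul_smul]
  refine (((hasFDerivAt_id z).sub hproj).add
    (HasFDerivAt.fun_sum fun j _ => hcoord j)).congr_fderiv ?_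
  simp only [orthoDiag, sub_smul, one_smul, Finset.sum_sub_distrib]
  abel

lemma hasFDerivAt_orthoDiag_comp (u : ι → X) {g g' : ℂ → ℂ} {z : X}
    (hg : ∀ j, HasDerivAt g (g' ⟪u j, z⟫_ℂ) ⟪u j, z⟫_ℂ) :
    HasFDerivAt (fun w => orthoDiag u fun j => g ⟪u j, w⟫_ℂ)
      (∑ j, (g' ⟪u j, z⟫_ℂ • innerSL ℂ (u j)).smulRight (rankOne ℂ (u j) (u j))) z := by
  refine (HasFDerivAt.fun_sum fun j _ => ?_).const_add (ContinuousLinearMap.id ℂ X)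
  exact (((hg j).comp_hasFDerivAt z (innerSL ℂ (u j)).hasFDerivAt).sub_const 1).smul_const
    (rankOne ℂ (u j) (u j))

lemma fderiv_fderiv_orthoExtension_apply (u : ι → X) {h h' h'' : ℂ → ℂ} {z : X}
    (hh : ∀ᶠ w in 𝓝 z, ∀ j, HasDerivAt h (h' ⟪u j, w⟫_ℂ) ⟪u j, w⟫_ℂ)
    (hh' : ∀ j, HasDerivAt h' (h'' ⟪u j, z⟫_ℂ) ⟪u j, z⟫_ℂ) (x y : X) :
    fderiv ℂ (fderiv ℂ (orthoExtension u h)) z x y =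
      ∑ j, (h'' ⟪u j, z⟫_ℂ * ⟪u j, x⟫_ℂ * ⟪u j, y⟫_ℂ) • u j := by
  have hD : fderiv ℂ (orthoExtension u h) =ᶠ[𝓝 z] fun w => orthoDiag u fun j => h' ⟪u j, w⟫_ℂ :=
    hh.mono fun w hw => (hasFDerivAt_orthoExtension u hw).fderiv
  rw [hD.fderiv_eq, (hasFDerivAt_orthoDiag_comp u hh').fderiv]
  simp [smul_smul]

lemma inner_mem_ball_of_norm_eq_one {v z : X} (hv : ‖v‖ = 1) (hz : z ∈ Metric.ball (0 : X) 1) :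
    ⟪v, z⟫_ℂ ∈ Metric.ball (0 : ℂ) 1 := by
  rw [mem_ball_zero_iff] at hz ⊢
  calc ‖⟪v, z⟫_ℂ‖ ≤ ‖v‖ * ‖z‖ := norm_inner_le_norm v z
    _ < 1 := by rwa [hv, one_mul]

theorem IsConvexMappingOfOrder.lt_of_orthoExtension [CompleteSpace X] {u : ι → X}
    (hu : Orthonormal ℂ u) {h h' h'' : ℂ → ℂ}
    (hh : ∀ ξ ∈ Metric.ball (0 : ℂ) 1, HasDerivAt h (h' ξ) ξ)
    (hh' : ∀ ξ ∈ Metric.ball (0 : ℂ) 1, HasDerivAt h' (h'' ξ) ξ)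
    (hh'_ne : ∀ ξ ∈ Metric.ball (0 : ℂ) 1, h' ξ ≠ 0) {α : ℝ}
    (hF : IsConvexMappingOfOrder (orthoExtension u h) α) {z : X}
    (hz : z ∈ Metric.ball (0 : X) 1) (hz_ne : z ≠ 0) {x : X} (hx_ne : x ≠ 0)
    (hxz : (⟪x, z⟫_ℂ).re = 0) :
    α * ‖x‖ ^ 2 < ‖x‖ ^ 2 - (∑ k, starRingEnd ℂ
      (h'' ⟪u k, z⟫_ℂ / h' ⟪u k, z⟫_ℂ * ⟪u k, x⟫_ℂ ^ 2) * ⟪u k, z⟫_ℂ).re := by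
  have ht : ∀ k, ⟪u k, z⟫_ℂ ∈ Metric.ball (0 : ℂ) 1 := fun k =>
    inner_mem_ball_of_norm_eq_one (hu.1 k) hz
  set d : ι → ℂ := fun k => h' ⟪u k, z⟫_ℂ
  have hDF : fderiv ℂ (orthoExtension u h) z = orthoDiag u d :=
    (hasFDerivAt_orthoExtension u fun k => hh _ (ht k)).fderiv
  have hd : d * d⁻¹ = 1 := funext fun k => mul_inv_cancel₀ (hh'_ne _ (ht k))
  have hD2 := fderiv_fderiv_orthoExtension_apply u (h'' := h'')
    (Filter.mem_of_superset (Metric.isOpen_ball.mem_nhds hz) fun w hw k =>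
      hh _ (inner_mem_ball_of_norm_eq_one (hu.1 k) hw)) (fun k => hh' _ (ht k)) x x
  have key := hF.2.2.2.2 z hz hz_ne x hx_ne hxz (orthoDiag u d⁻¹)
    (by rw [hDF, orthoDiag_comp_orthoDiag hu, hd, orthoDiag_one])
    (by rw [hDF, orthoDiag_comp_orthoDiag hu, mul_comm, hd, orthoDiag_one])
  rw [hD2, orthoDiag_sum_smul hu, sum_inner] at key
  convert key using 6 with k
  simp only [inner_smul_left, Pi.inv_apply, d, div_eq_inv_mul, sq, mul_assoc]

theorem IsConvexMappingOfOrder.two_mul_lt_of_orthoExtension [CompleteSpace X] {u : ι → X}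
    (hu : Orthonormal ℂ u) {i j : ι} (hij : i ≠ j) {h h' h'' : ℂ → ℂ}
    (hh : ∀ ξ ∈ Metric.ball (0 : ℂ) 1, HasDerivAt h (h' ξ) ξ)
    (hh' : ∀ ξ ∈ Metric.ball (0 : ℂ) 1, HasDerivAt h' (h'' ξ) ξ)
    (hh'_ne : ∀ ξ ∈ Metric.ball (0 : ℂ) 1, h' ξ ≠ 0) {α : ℝ}
    (hF : IsConvexMappingOfOrder (orthoExtension u h) α) :
    2 * α < 2 - (h'' 2⁻¹ / h' 2⁻¹).re := by
  classical
  have hδ := orthonormal_iff_ite.mp hu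
  set z : X := (2 : ℂ)⁻¹ • (u i + u j)
  set x : X := u i - u j
  have hz : ∀ k, ⟪u k, z⟫_ℂ = (if k = i then 2⁻¹ else 0) + if k = j then 2⁻¹ else 0 := by
    simp [z, hδ]
  have hx : ∀ k, ⟪u k, x⟫_ℂ = (if k = i then 1 else 0) - if k = j then 1 else 0 := by
    simp [x, hδ]
  have hz_mem : z ∈ Metric.ball (0 : X) 1 := by
    rw [mem_ball_zero_iff, ← sq_lt_one_iff₀ (norm_nonneg _), norm_smul, mul_pow,
      @norm_add_sq ℂ, hu.1 i, hu.1 j, hu.2 hij]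
    norm_num
  have hx_norm : ‖x‖ ^ 2 = 2 := by
    rw [@norm_sub_sq ℂ, hu.1 i, hu.1 j, hu.2 hij]
    norm_num
  have key := hF.lt_of_orthoExtension hu hh hh' hh'_ne (x := x) hz_mem
    (fun h0 => by simpa [hij, h0] using hz i) (fun h0 => by simpa [hij, h0] using hx i)
    (by simp [x, z, hδ, hij, hij.symm, hu.1 i, hu.1 j])
  rw [Fintype.sum_eq_add i j hij fun k hk => by simp [hx, hk.1, hk.2], hx_norm] at key
  simp only [hz, hx, if_pos, if_neg hij, if_neg hij.symm, add_zero, zero_add, sub_zero,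
    zero_sub, neg_sq, one_pow, mul_one, ← two_mul] at key
  rw [mul_left_comm, mul_inv_cancel₀ two_ne_zero, mul_one, conj_re] at key
  linarith

end OrthoExtension

noncomputable def convexOrderExtremal (α : ℝ) (ξ : ℂ) : ℂ :=
  if α = 1 / 2 then -log (1 - ξ)
  else (1 - (1 - ξ) ^ ((2 * α - 1 : ℝ) : ℂ)) / ((2 * α - 1 : ℝ) : ℂ)

lemma one_sub_mem_slitPlane {ξ : ℂ} (hξ : ξ ∈ Metric.ball (0 : ℂ) 1) : 1 - ξ ∈ slitPlane := by
  simpa [sub_eq_add_neg] using mem_slitPlane_of_norm_lt_one (z := -ξ) (by simpa using hξ)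

lemma hasDerivAt_one_sub_cpow (d : ℂ) {ξ : ℂ} (hξ : 1 - ξ ∈ slitPlane) :
    HasDerivAt (fun ζ => (1 - ζ) ^ d) (-(d * (1 - ξ) ^ (d - 1))) ξ := by
  simpa using ((hasDerivAt_id ξ).const_sub 1).cpow_const (c := d) hξ

lemma neg_mul_cpow_sub_one_div_cpow (d : ℂ) {w : ℂ} (hw : w ≠ 0) :
    -(d * w ^ (d - 1)) / w ^ d = -d / w := by
  rw [cpow_sub _ _ hw, cpow_one]
  have : w ^ d ≠ 0 := fun h => hw ((cpow_eq_zero_iff w d).mp h).1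
  field_simp

lemma hasDerivAt_convexOrderExtremal (α : ℝ) {ξ : ℂ} (hξ : 1 - ξ ∈ slitPlane) :
    HasDerivAt (convexOrderExtremal α) ((1 - ξ) ^ ((2 * α - 1 : ℝ) - 1 : ℂ)) ξ := by
  unfold convexOrderExtremal
  split_ifs with hα
  · rw [hα, show ((2 * (1 / 2 : ℝ) - 1 : ℝ) - 1 : ℂ) = -1 by norm_num, cpow_neg_one]
    exact (((hasDerivAt_log hξ).comp ξ ((hasDerivAt_id ξ).const_sub 1)).neg).congr_deriv
      (by simp)
  · have hc : ((2 * α - 1 : ℝ) : ℂ) ≠ 0 := by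
      exact_mod_cast sub_ne_zero.mpr (by contrapose! hα; linarith)
    refine (((hasDerivAt_one_sub_cpow _ hξ).const_sub 1).div_const _).congr_deriv ?_
    field_simp

lemma deriv_convexOrderExtremal_eventuallyEq (α : ℝ) {ξ : ℂ} (hξ : 1 - ξ ∈ slitPlane) :
    deriv (convexOrderExtremal α) =ᶠ[𝓝 ξ] fun ζ => (1 - ζ) ^ ((2 * α - 1 : ℝ) - 1 : ℂ) := by
  have hopen : IsOpen {ζ : ℂ | 1 - ζ ∈ slitPlane} :=
    isOpen_slitPlane.preimage (by fun_prop)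
  filter_upwards [hopen.mem_nhds hξ] with ζ hζ
  exact (hasDerivAt_convexOrderExtremal α hζ).deriv

lemma neg_half_lt_re_div_one_sub {ξ : ℂ} (hξ : ‖ξ‖ < 1) : -(1 / 2) < (ξ / (1 - ξ)).re := by
  have hw : 1 - ξ ≠ 0 := sub_ne_zero.mpr fun h => by simp [← h] at hξ
  have hsq : ξ.re * ξ.re + ξ.im * ξ.im < 1 := by
    rw [← normSq_apply, normSq_eq_norm_sq]
    nlinarith [norm_nonneg ξ]
  rw [show ξ / (1 - ξ) = (1 - ξ)⁻¹ - 1 by field_simp; ring, sub_re, inv_re, one_re,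
    lt_sub_iff_add_lt, lt_div_iff₀ (normSq_pos.mpr hw), normSq_apply]
  simp only [sub_re, one_re, sub_im, one_im]
  nlinarith

theorem lt_re_one_add_mul_deriv_deriv_convexOrderExtremal {α : ℝ} (hα : α < 1) {ξ : ℂ}
    (hξ : ξ ∈ Metric.ball (0 : ℂ) 1) :
    α < (1 + ξ * deriv (deriv (convexOrderExtremal α)) ξ / deriv (convexOrderExtremal α) ξ).re := by
  have hs := one_sub_mem_slitPlane hξ
  rw [(deriv_convexOrderExtremal_eventuallyEq α hs).deriv_eq, (hasDerivAt_one_sub_cpow _ hs).deriv,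
    (hasDerivAt_convexOrderExtremal α hs).deriv, mul_div_assoc,
    neg_mul_cpow_sub_one_div_cpow _ (slitPlane_ne_zero hs), show 1 + ξ * (-((2 * α - 1 : ℝ) - 1 : ℂ) / (1 - ξ))
      = 1 + ((2 - 2 * α : ℝ) : ℂ) * (ξ / (1 - ξ)) by push_cast; ring, add_re, one_re, re_ofReal_mul]
  nlinarith [neg_half_lt_re_div_one_sub (mem_ball_zero_iff.mp hξ)]

theorem stmt_15_general {X : Type*} [NormedAddCommGroup X] [InnerProductSpace ℂ X] [CompleteSpace X]
    (m : ℕ) (hm : 2 ≤ m) (α : ℝ) (hα1 : α < 1)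
    (u : Fin m → X) (hu : Orthonormal ℂ u)
    (h : ℂ → ℂ)
    (hh : h = fun ξ => if α = 1 / 2 then -Complex.log (1 - ξ)
      else (1 - (1 - ξ) ^ (((2 * α - 1 : ℝ)) : ℂ)) / ((2 * α - 1 : ℝ) : ℂ))
    (F : X → X)
    (hF : F = fun z => z - ∑ j : Fin m, (inner ℂ (u j) z : ℂ) • u j
      + ∑ j : Fin m, h (inner ℂ (u j) z : ℂ) • u j) :
    (∀ ξ ∈ Metric.ball (0 : ℂ) 1,
      α < (1 + ξ * deriv (deriv h) ξ / deriv h ξ).re) ∧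
    ¬ IsConvexMappingOfOrder F α := by
  change h = convexOrderExtremal α at hh
  change F = orthoExtension u h at hF
  subst hh hF
  refine ⟨fun ξ hξ => lt_re_one_add_mul_deriv_deriv_convexOrderExtremal hα1 hξ, fun hconv => ?_⟩
  have key := hconv.two_mul_lt_of_orthoExtension hu (i := ⟨0, by omega⟩) (j := ⟨1, by omega⟩)
    (by simp [Fin.ext_iff])
    (fun ξ hξ => hasDerivAt_convexOrderExtremal α (one_sub_mem_slitPlane hξ))
    (fun ξ hξ => hasDerivAt_one_sub_cpow _ (one_sub_mem_slitPlane hξ))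
    (fun ξ hξ h0 => slitPlane_ne_zero (one_sub_mem_slitPlane hξ) ((cpow_eq_zero_iff _ _).mp h0).1)
  rw [neg_mul_cpow_sub_one_div_cpow _ (by norm_num),
    show -(((2 * α - 1 : ℝ) : ℂ) - 1) / (1 - 2⁻¹) = ((4 - 4 * α : ℝ) : ℂ) by push_cast; ring,
    ofReal_re] at key
  linarith

/-- h(ξ) = (1−(1−ξ)^{2α−1})/(2α−1) (resp. −log(1−ξ) when α = 1/2) is convex
of order α on the unit disk, but F = Φ(h,…,h) is not a biholomorphic convex mapping of
order α on the unit ball of any complex Hilbert space containing m ≥ 2 orthonormal vectors. -/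
theorem stmt_15 {X : Type*} [NormedAddCommGroup X] [InnerProductSpace ℂ X] [CompleteSpace X]
    (m : ℕ) (hm : 2 ≤ m) (α : ℝ) (hα0 : 0 ≤ α) (hα1 : α < 1)
    (u : Fin m → X) (hu : Orthonormal ℂ u)
    (h : ℂ → ℂ)
    (hh : h = fun ξ => if α = 1 / 2 then -Complex.log (1 - ξ)
      else (1 - (1 - ξ) ^ (((2 * α - 1 : ℝ)) : ℂ)) / ((2 * α - 1 : ℝ) : ℂ))
    (F : X → X)
    (hF : F = fun z => z - ∑ j : Fin m, (inner ℂ (u j) z : ℂ) • u j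
      + ∑ j : Fin m, h (inner ℂ (u j) z : ℂ) • u j) :
    (∀ ξ ∈ Metric.ball (0 : ℂ) 1,
      α < (1 + ξ * deriv (deriv h) ξ / deriv h ξ).re) ∧
    ¬ IsConvexMappingOfOrder F α :=
  stmt_15_general m hm α hα1 u hu h hh F hF
end

section
/- Let X be a complex Hilbert space with dim X ≥ m ≥ 2, α ∈ [0,1), u₁,…,u_m ∈ X orthonormal, and λ₁,…,λ_m ∈ ℂ \ {0}. Then f(z) = z − Σ_j ⟨z,u_j⟩ u_j + Σ_j (e^{λ_j ⟨z,u_j⟩} − 1)/λ_j · u_j is a biholomorphic convex mapping of order α on the unit ball B of X if and only if |λ_j| ≤ 1−α for all j = 1,…,m. -/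
/-!
With `wⱼ = ⟪uⱼ, z⟫`, the derivative `Df(z)` multiplies `uⱼ` by `exp (λⱼ wⱼ)` and is the identity
on the orthogonal complement of the `uⱼ`; its inverse is obtained by replacing `λⱼ wⱼ` with
`-λⱼ wⱼ`, and the exponential factors cancel in `Df(z)⁻¹ D²f(z)(x,x) = ∑ⱼ λⱼ ⟪uⱼ, x⟫² uⱼ`.
If every `|λⱼ| ≤ 1 - α`, Bessel's inequality bounds `|⟪Df(z)⁻¹ D²f(z)(x,x), z⟫|` by
`(1 - α) ‖z‖ ‖x‖²`. Conversely, for `x` and `z` on the line `ℂ uⱼ`, with phases chosen so that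
`⟪x, z⟫` is imaginary, the real part of the pairing is `‖z‖ |λⱼ|`; taking
`‖z‖ = (1 - α) / |λⱼ|` rules out `|λⱼ| > 1 - α`.
-/

open Complex ContinuousLinearMap InnerProductSpace
open scoped InnerProductSpace ComplexConjugate

namespace ExpPert
variable {X : Type*} [NormedAddCommGroup X] [InnerProductSpace ℂ X] {ι : Type*} [Fintype ι]

noncomputable def idAddDiag (u : ι → X) (p : ι → ℂ) : X →L[ℂ] X :=
  ContinuousLinearMap.id ℂ X + ∑ j, p j • rankOne ℂ (u j) (u j)

lemma idAddDiag_apply (u : ι → X) (p : ι → ℂ) (x : X) :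
    idAddDiag u p x = x + ∑ j, (p j * ⟪u j, x⟫_ℂ) • u j := by
  simp [idAddDiag, sum_apply, smul_smul]

lemma inner_idAddDiag {u : ι → X} (hu : Orthonormal ℂ u) (p : ι → ℂ) (x : X) (k : ι) :
    ⟪u k, idAddDiag u p x⟫_ℂ = (1 + p k) * ⟪u k, x⟫_ℂ := by
  rw [idAddDiag_apply, inner_add_right, hu.inner_right_fintype, add_mul, one_mul]

lemma idAddDiag_comp {u : ι → X} (hu : Orthonormal ℂ u) (p q : ι → ℂ) :
    (idAddDiag u p).comp (idAddDiag u q) = idAddDiag u (fun j => p j + q j + p j * q j) := by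
  ext x
  rw [comp_apply, idAddDiag_apply u p]
  simp only [inner_idAddDiag hu]
  rw [idAddDiag_apply, idAddDiag_apply, add_assoc, ← Finset.sum_add_distrib]
  congr 1
  refine Finset.sum_congr rfl fun j _ => ?_
  rw [← add_smul]
  ring_nf

lemma idAddDiag_zero (u : ι → X) : idAddDiag u 0 = ContinuousLinearMap.id ℂ X := by
  simp [idAddDiag]

lemma idAddDiag_exp_comp {u : ι → X} (hu : Orthonormal ℂ u) (w : ι → ℂ) :
    (idAddDiag u fun j => exp (w j) - 1).comp (idAddDiag u fun j => exp (-w j) - 1)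
      = ContinuousLinearMap.id ℂ X := by
  rw [idAddDiag_comp hu, ← idAddDiag_zero u]
  congr 1
  funext j
  have h : exp (w j) * exp (-w j) = 1 := by rw [← exp_add, add_neg_cancel, exp_zero]
  rw [Pi.zero_apply]
  linear_combination h

noncomputable def expPert (u : ι → X) (lam : ι → ℂ) (z : X) : X :=
  z - ∑ j, ⟪u j, z⟫_ℂ • u j + ∑ j, ((exp (lam j * ⟪u j, z⟫_ℂ) - 1) / lam j) • u j

lemma expPert_eq (u : ι → X) (lam : ι → ℂ) :
    expPert u lam =
      fun z => z + ∑ j, ((exp (lam j * ⟪u j, z⟫_ℂ) - 1) / lam j - ⟪u j, z⟫_ℂ) • u j := by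
  funext z
  simp only [expPert, sub_smul, Finset.sum_sub_distrib]
  abel

lemma hasDerivAt_exp_mul_sub_one_div_sub {a : ℂ} (ha : a ≠ 0) (w : ℂ) :
    HasDerivAt (fun w => (exp (a * w) - 1) / a - w) (exp (a * w) - 1) w := by
  refine ((((hasDerivAt_id w).const_mul a).cexp.sub_const 1).div_const a).sub (hasDerivAt_id w)
    |>.congr_deriv ?_
  field_simp
  rfl

lemma hasFDerivAt_expPert {lam : ι → ℂ} (hlam : ∀ j, lam j ≠ 0) (u : ι → X) (z : X) :
    HasFDerivAt (expPert u lam) (idAddDiag u fun j => exp (lam j * ⟪u j, z⟫_ℂ) - 1) z := by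
  rw [expPert_eq]
  have h := (hasFDerivAt_id z).add <| HasFDerivAt.fun_sum fun j (_ : j ∈ Finset.univ) =>
    ((hasDerivAt_exp_mul_sub_one_div_sub (hlam j) _).comp_hasFDerivAt z
      (innerSL ℂ (u j)).hasFDerivAt).smul_const (u j)
  exact h.congr_fderiv (by ext x; simp [idAddDiag_apply])

lemma fderiv_expPert {lam : ι → ℂ} (hlam : ∀ j, lam j ≠ 0) (u : ι → X) :
    fderiv ℂ (expPert u lam) = fun z => idAddDiag u fun j => exp (lam j * ⟪u j, z⟫_ℂ) - 1 :=
  funext fun z => (hasFDerivAt_expPert hlam u z).fderiv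

lemma hasFDerivAt_exp_mul_inner_sub_one (a : ℂ) (v z : X) :
    HasFDerivAt (fun z => exp (a * ⟪v, z⟫_ℂ) - 1) ((a * exp (a * ⟪v, z⟫_ℂ)) • innerSL ℂ v) z := by
  have h := ((((innerSL ℂ v).hasFDerivAt (x := z)).const_mul a).cexp).sub_const 1
  exact h.congr_fderiv (by rw [smul_smul, mul_comm]; rfl)

lemma hasFDerivAt_idAddDiag_exp (u : ι → X) (lam : ι → ℂ) (z : X) :
    HasFDerivAt (fun z => idAddDiag u fun j => exp (lam j * ⟪u j, z⟫_ℂ) - 1)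
      (∑ j, ((lam j * exp (lam j * ⟪u j, z⟫_ℂ)) • innerSL ℂ (u j)).smulRight
        (rankOne ℂ (u j) (u j))) z :=
  (HasFDerivAt.fun_sum fun j (_ : j ∈ Finset.univ) =>
    (hasFDerivAt_exp_mul_inner_sub_one (lam j) (u j) z).smul_const (rankOne ℂ (u j) (u j))
    ).const_add (ContinuousLinearMap.id ℂ X)

lemma fderiv_fderiv_expPert_apply {lam : ι → ℂ} (hlam : ∀ j, lam j ≠ 0) (u : ι → X) (z x : X) :
    fderiv ℂ (fderiv ℂ (expPert u lam)) z x x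
      = ∑ j, (lam j * exp (lam j * ⟪u j, z⟫_ℂ) * ⟪u j, x⟫_ℂ ^ 2) • u j := by
  rw [fderiv_expPert hlam, (hasFDerivAt_idAddDiag_exp u lam z).fderiv]
  simp [sum_apply, smul_smul, sq, mul_assoc]

lemma eq_idAddDiag_of_comp_fderiv_expPert {u : ι → X} (hu : Orthonormal ℂ u) {lam : ι → ℂ}
    (hlam : ∀ j, lam j ≠ 0) {z : X} {g : X →L[ℂ] X}
    (hg : g.comp (fderiv ℂ (expPert u lam) z) = ContinuousLinearMap.id ℂ X) :
    g = idAddDiag u fun j => exp (-(lam j * ⟪u j, z⟫_ℂ)) - 1 :=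
  left_inv_eq_right_inv (M := X →L[ℂ] X) hg <| by
    rw [fderiv_expPert hlam]
    exact idAddDiag_exp_comp hu _

lemma apply_fderiv_fderiv_expPert_of_comp {u : ι → X} (hu : Orthonormal ℂ u) {lam : ι → ℂ}
    (hlam : ∀ j, lam j ≠ 0) {z : X} {g : X →L[ℂ] X}
    (hg : g.comp (fderiv ℂ (expPert u lam) z) = ContinuousLinearMap.id ℂ X) (x : X) :
    g (fderiv ℂ (fderiv ℂ (expPert u lam)) z x x) = ∑ j, (lam j * ⟪u j, x⟫_ℂ ^ 2) • u j := by
  rw [eq_idAddDiag_of_comp_fderiv_expPert hu hlam hg, fderiv_fderiv_expPert_apply hlam,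
    idAddDiag_apply]
  simp only [hu.inner_right_fintype, ← Finset.sum_add_distrib, ← add_smul]
  refine Finset.sum_congr rfl fun j _ => ?_
  have h : exp (-(lam j * ⟪u j, z⟫_ℂ)) * exp (lam j * ⟪u j, z⟫_ℂ) = 1 := by
    rw [← exp_add, neg_add_cancel, exp_zero]
  congr 1
  linear_combination (lam j * ⟪u j, x⟫_ℂ ^ 2) * h

lemma isConvexMappingOfOrder_expPert_iff [CompleteSpace X] {u : ι → X} (hu : Orthonormal ℂ u)
    {lam : ι → ℂ} (hlam : ∀ j, lam j ≠ 0) (α : ℝ) :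
    IsConvexMappingOfOrder (expPert u lam) α ↔
      ∀ z ∈ Metric.ball (0 : X) 1, z ≠ 0 → ∀ x : X, x ≠ 0 → (⟪x, z⟫_ℂ).re = 0 →
        α * ‖x‖ ^ 2 < ‖x‖ ^ 2 - (⟪∑ j, (lam j * ⟪u j, x⟫_ℂ ^ 2) • u j, z⟫_ℂ).re := by
  have hinv : ∀ z, let g := idAddDiag u fun j => exp (-(lam j * ⟪u j, z⟫_ℂ)) - 1
      (fderiv ℂ (expPert u lam) z).comp g = ContinuousLinearMap.id ℂ X ∧
        g.comp (fderiv ℂ (expPert u lam) z) = ContinuousLinearMap.id ℂ X := fun z => by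
    rw [fderiv_expPert hlam]
    refine ⟨idAddDiag_exp_comp hu _, ?_⟩
    simpa only [neg_neg] using idAddDiag_exp_comp hu fun j => -(lam j * ⟪u j, z⟫_ℂ)
  constructor
  · rintro ⟨-, -, -, -, h⟩ z hz hz0 x hx hre
    have := h z hz hz0 x hx hre _ (hinv z).1 (hinv z).2
    rwa [apply_fderiv_fderiv_expPert_of_comp hu hlam (hinv z).2] at this
  · refine fun h => ⟨fun z _ => (hasFDerivAt_expPert hlam u z).differentiableAt,
      by simp [expPert], ?_, fun z _ => ⟨_, hinv z⟩, fun z hz hz0 x hx hre g _ hg => ?_⟩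
    · rw [fderiv_expPert hlam]
      simp [idAddDiag]
    · rw [apply_fderiv_fderiv_expPert_of_comp hu hlam hg]
      exact h z hz hz0 x hx hre

lemma norm_inner_sum_mul_inner_sq_le {u : ι → X} (hu : Orthonormal ℂ u) {lam : ι → ℂ} {C : ℝ}
    (hC : 0 ≤ C) (hlam : ∀ j, ‖lam j‖ ≤ C) (x z : X) :
    ‖⟪∑ j, (lam j * ⟪u j, x⟫_ℂ ^ 2) • u j, z⟫_ℂ‖ ≤ C * ‖z‖ * ‖x‖ ^ 2 := by
  have hz : ∀ j, ‖⟪u j, z⟫_ℂ‖ ≤ ‖z‖ := fun j =>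
    (norm_inner_le_norm _ _).trans_eq (by rw [hu.norm_eq_one, one_mul])
  calc ‖⟪∑ j, (lam j * ⟪u j, x⟫_ℂ ^ 2) • u j, z⟫_ℂ‖
      = ‖∑ j, conj (lam j * ⟪u j, x⟫_ℂ ^ 2) * ⟪u j, z⟫_ℂ‖ := by
        simp only [sum_inner, inner_smul_left]
    _ ≤ ∑ j, ‖lam j‖ * ‖⟪u j, z⟫_ℂ‖ * ‖⟪u j, x⟫_ℂ‖ ^ 2 := by
        refine (norm_sum_le _ _).trans_eq (Finset.sum_congr rfl fun j _ => ?_)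
        rw [norm_mul, RCLike.norm_conj, norm_mul, norm_pow]
        ring
    _ ≤ ∑ j, C * ‖z‖ * ‖⟪u j, x⟫_ℂ‖ ^ 2 := by
        gcongr with j
        exacts [hlam j, hz j]
    _ = C * ‖z‖ * ∑ j, ‖⟪u j, x⟫_ℂ‖ ^ 2 := (Finset.mul_sum _ _ _).symm
    _ ≤ C * ‖z‖ * ‖x‖ ^ 2 := by
        gcongr
        exact hu.sum_inner_products_le x

lemma re_inner_sum_mul_inner_sq_lt {u : ι → X} (hu : Orthonormal ℂ u) {lam : ι → ℂ} {C : ℝ}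
    (hC : 0 < C) (hlam : ∀ j, ‖lam j‖ ≤ C) {x z : X} (hx : x ≠ 0) (hz : ‖z‖ < 1) :
    (⟪∑ j, (lam j * ⟪u j, x⟫_ℂ ^ 2) • u j, z⟫_ℂ).re < C * ‖x‖ ^ 2 := by
  have hx : 0 < ‖x‖ := norm_pos_iff.2 hx
  calc (⟪∑ j, (lam j * ⟪u j, x⟫_ℂ ^ 2) • u j, z⟫_ℂ).re
      ≤ ‖⟪∑ j, (lam j * ⟪u j, x⟫_ℂ ^ 2) • u j, z⟫_ℂ‖ := re_le_norm _
    _ ≤ C * ‖z‖ * ‖x‖ ^ 2 := norm_inner_sum_mul_inner_sq_le hu hC.le hlam x z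
    _ < C * 1 * ‖x‖ ^ 2 := by gcongr
    _ = C * ‖x‖ ^ 2 := by rw [mul_one]

lemma exists_re_inner_sum_mul_inner_sq_eq {u : ι → X} (hu : Orthonormal ℂ u) (lam : ι → ℂ)
    (j : ι) {r : ℝ} (hr : 0 ≤ r) :
    ∃ x z : X, ‖x‖ = 1 ∧ ‖z‖ = r ∧ (⟪x, z⟫_ℂ).re = 0 ∧
      (⟪∑ k, (lam k * ⟪u k, x⟫_ℂ ^ 2) • u k, z⟫_ℂ).re = r * ‖lam j‖ := by
  set w := exp ((-arg (lam j) : ℝ) * I)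
  have hw : ‖w‖ = 1 := norm_exp_ofReal_mul_I _
  have hww : conj w * w = 1 := by rw [conj_mul', hw]; norm_num
  have hlw : conj (lam j) * conj w = ‖lam j‖ := by
    rw [← map_mul, ← conj_ofReal]
    congr 1
    rw [← norm_mul_exp_arg_mul_I (lam j), mul_assoc, ← exp_add]
    simp
  have huj : ⟪u j, u j⟫_ℂ = 1 := by rw [inner_self_eq_norm_sq_to_K, hu.norm_eq_one]; norm_num
  have hsum : ∑ k, (lam k * ⟪u k, (I * w) • u j⟫_ℂ ^ 2) • u k = (lam j * (I * w) ^ 2) • u j := by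
    rw [Finset.sum_eq_single_of_mem j (Finset.mem_univ j) fun k _ hk => by
      rw [inner_smul_right, hu.inner_eq_zero hk]; simp, inner_smul_right, huj, mul_one]
  refine ⟨(I * w) • u j, (-(r : ℂ) * w) • u j, ?_, ?_, ?_, ?_⟩
  · rw [norm_smul, hu.norm_eq_one, norm_mul, norm_I, hw]; norm_num
  · rw [norm_smul, hu.norm_eq_one, norm_mul, hw, norm_neg, norm_real, Real.norm_of_nonneg hr]
    norm_num
  · rw [inner_smul_left, inner_smul_right, huj, map_mul, conj_I]
    rw [show -I * conj w * (-(r : ℂ) * w * 1) = (r : ℂ) * I by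
      linear_combination (r * I : ℂ) * hww]
    simp
  · rw [hsum, inner_smul_left, inner_smul_right, huj]
    have : conj (lam j * (I * w) ^ 2) * (-(r : ℂ) * w * 1) = (r * ‖lam j‖ : ℝ) := by
      simp only [map_mul, map_pow, mul_pow, I_sq, map_neg, map_one]
      push_cast
      linear_combination (r * conj (lam j) * conj w) * hww + r * hlw
    rw [this, ofReal_re]

end ExpPert

theorem stmt_16_general {X : Type*} [NormedAddCommGroup X] [InnerProductSpace ℂ X] [CompleteSpace X]
    (m : ℕ) (α : ℝ) (hα1 : α < 1)
    (u : Fin m → X) (hu : Orthonormal ℂ u)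
    (lam : Fin m → ℂ) (hlam : ∀ j, lam j ≠ 0) :
    IsConvexMappingOfOrder
      (fun z : X => z - ∑ j : Fin m, (inner ℂ (u j) z : ℂ) • u j
        + ∑ j : Fin m,
            ((Complex.exp (lam j * (inner ℂ (u j) z : ℂ)) - 1) / lam j) • u j) α ↔
      ∀ j, ‖lam j‖ ≤ 1 - α := by
  change IsConvexMappingOfOrder (ExpPert.expPert u lam) α ↔ _
  rw [ExpPert.isConvexMappingOfOrder_expPert_iff hu hlam]
  refine ⟨fun h j => ?_, fun hle z hz _ x hx _ => ?_⟩
  · by_contra! hlt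
    have hL : 0 < ‖lam j‖ := norm_pos_iff.2 (hlam j)
    set r := (1 - α) / ‖lam j‖
    have hr : 0 < r := div_pos (sub_pos.2 hα1) hL
    obtain ⟨x, z, hx, hz, hxz, hval⟩ := ExpPert.exists_re_inner_sum_mul_inner_sq_eq hu lam j hr.le
    have hz1 : z ∈ Metric.ball (0 : X) 1 := by
      rw [mem_ball_zero_iff, hz]
      exact (div_lt_one hL).2 hlt
    have := h z hz1 (norm_pos_iff.1 (hz ▸ hr)) x (by rintro rfl; simp at hx) hxz
    rw [hx, hval, div_mul_cancel₀ _ hL.ne'] at this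
    linarith
  · linarith [ExpPert.re_inner_sum_mul_inner_sq_lt hu (sub_pos.2 hα1) hle hx
      (mem_ball_zero_iff.1 hz)]

/-- f(z) = z − Σ⟨z,u_j⟩u_j + Σ (e^{λ_j⟨z,u_j⟩}−1)/λ_j · u_j is a
biholomorphic convex mapping of order α on B iff |λ_j| ≤ 1−α for all j. -/
theorem stmt_16 {X : Type*} [NormedAddCommGroup X] [InnerProductSpace ℂ X] [CompleteSpace X]
    (m : ℕ) (hm : 2 ≤ m) (α : ℝ) (hα0 : 0 ≤ α) (hα1 : α < 1)
    (u : Fin m → X) (hu : Orthonormal ℂ u)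
    (lam : Fin m → ℂ) (hlam : ∀ j, lam j ≠ 0) :
    IsConvexMappingOfOrder
      (fun z : X => z - ∑ j : Fin m, (inner ℂ (u j) z : ℂ) • u j
        + ∑ j : Fin m,
            ((Complex.exp (lam j * (inner ℂ (u j) z : ℂ)) - 1) / lam j) • u j) α ↔
      ∀ j, ‖lam j‖ ≤ 1 - α :=
  stmt_16_general m α hα1 u hu lam hlam
end

section
/- For a symmetric bounded bilinear operator T on a complex Hilbert space X with values in a Banach space, the operator norm equals the supremum over the diagonal: sup_{‖x‖=1, ‖y‖=1} ‖T(x,y)‖ = sup_{‖x‖=1} ‖T(x,x)‖. -/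
/-!
By homogeneity, a bound `M` for `‖T u u‖` on the unit sphere gives `‖T z z‖ ≤ M ‖z‖²` everywhere.
Symmetry yields the polarization identity `4 T(x, y) = T(x + y, x + y) - T(x - y, x - y)`, and
the parallelogram law turns the resulting bound `M (‖x + y‖² + ‖x - y‖²)` into
`2 M (‖x‖² + ‖y‖²) = 4 M` for unit vectors. The reverse inequality is trivial. Real suprema are
used throughout (`sup ∅ = 0`), so the degenerate case `X = 0` needs no separate treatment.
-/

section

variable {𝕜 E F : Type*} [RCLike 𝕜] [NormedAddCommGroup E] [NormedSpace 𝕜 E]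
  [NormedAddCommGroup F] [NormedSpace 𝕜 F]

theorem ContinuousLinearMap.norm_apply_apply_self_le_of_norm_eq_one (T : E →L[𝕜] E →L[𝕜] F)
    {M : ℝ} (hM : ∀ u : E, ‖u‖ = 1 → ‖T u u‖ ≤ M) (z : E) : ‖T z z‖ ≤ M * ‖z‖ ^ 2 := by
  rcases eq_or_ne z 0 with rfl | hz
  · simp
  have hz' : 0 < ‖z‖ := norm_pos_iff.mpr hz
  have hunit : ‖(‖z‖⁻¹ : 𝕜) • z‖ = 1 := by
    rw [norm_smul, norm_inv, RCLike.norm_ofReal, abs_norm, inv_mul_cancel₀ hz'.ne']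
  have hscale : ‖T ((‖z‖⁻¹ : 𝕜) • z) ((‖z‖⁻¹ : 𝕜) • z)‖ = ‖T z z‖ / ‖z‖ ^ 2 := by
    simp only [map_smul, smul_apply, norm_smul, norm_inv, RCLike.norm_ofReal, abs_norm]
    field_simp
  exact (div_le_iff₀ (by positivity)).mp (hscale ▸ hM _ hunit)

theorem ContinuousLinearMap.four_smul_apply_of_symm (T : E →L[𝕜] E →L[𝕜] F)
    (hT : ∀ x y, T x y = T y x) (x y : E) :
    (4 : 𝕜) • T x y = T (x + y) (x + y) - T (x - y) (x - y) := by
  simp only [map_add, map_sub, add_apply, sub_apply, hT y x]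
  module

end

section

variable {𝕜 E F : Type*} [RCLike 𝕜] [NormedAddCommGroup E] [InnerProductSpace 𝕜 E]
  [NormedAddCommGroup F] [NormedSpace 𝕜 F]

theorem ContinuousLinearMap.two_mul_norm_apply_le_of_symm (T : E →L[𝕜] E →L[𝕜] F)
    (hT : ∀ x y, T x y = T y x) {M : ℝ} (hM : ∀ z, ‖T z z‖ ≤ M * ‖z‖ ^ 2) (x y : E) :
    2 * ‖T x y‖ ≤ M * (‖x‖ ^ 2 + ‖y‖ ^ 2) := by
  have hpar : ‖x + y‖ ^ 2 + ‖x - y‖ ^ 2 = 2 * (‖x‖ ^ 2 + ‖y‖ ^ 2) := by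
    simpa only [sq] using parallelogram_law_with_norm 𝕜 x y
  have h4 : 4 * ‖T x y‖ ≤ M * (‖x + y‖ ^ 2 + ‖x - y‖ ^ 2) :=
    calc 4 * ‖T x y‖ = ‖T (x + y) (x + y) - T (x - y) (x - y)‖ := by
          rw [← T.four_smul_apply_of_symm hT, norm_smul, RCLike.norm_ofNat]
      _ ≤ ‖T (x + y) (x + y)‖ + ‖T (x - y) (x - y)‖ := norm_sub_le _ _
      _ ≤ M * ‖x + y‖ ^ 2 + M * ‖x - y‖ ^ 2 := add_le_add (hM _) (hM _)
      _ = M * (‖x + y‖ ^ 2 + ‖x - y‖ ^ 2) := by ring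
  rw [hpar] at h4
  linarith

end

theorem stmt_17_general {X Y : Type*} [NormedAddCommGroup X] [InnerProductSpace ℂ X]
    [NormedAddCommGroup Y] [NormedSpace ℂ Y]
    (T : X →L[ℂ] X →L[ℂ] Y) (hT : ∀ x y : X, T x y = T y x) :
    (⨆ x : {x : X // ‖x‖ = 1}, ⨆ y : {y : X // ‖y‖ = 1}, ‖T x y‖) =
      ⨆ x : {x : X // ‖x‖ = 1}, ‖T x x‖ := by
  set M := ⨆ x : {x : X // ‖x‖ = 1}, ‖T x x‖
  have hM : 0 ≤ M := Real.iSup_nonneg fun _ => norm_nonneg _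
  have hdiag_bdd : BddAbove (Set.range fun x : {x : X // ‖x‖ = 1} => ‖T x x‖) :=
    ⟨‖T‖, by
      rintro _ ⟨x, rfl⟩
      simpa [x.2] using T.le_opNorm₂ x x⟩
  have hdiag : ∀ z, ‖T z z‖ ≤ M * ‖z‖ ^ 2 :=
    T.norm_apply_apply_self_le_of_norm_eq_one fun u hu => le_ciSup hdiag_bdd ⟨u, hu⟩
  have hunit (x y : {x : X // ‖x‖ = 1}) : ‖T x y‖ ≤ M := by
    have := T.two_mul_norm_apply_le_of_symm hT hdiag x y
    rw [x.2, y.2] at this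
    linarith
  have hrow_bdd (x : {x : X // ‖x‖ = 1}) :
      BddAbove (Set.range fun y : {y : X // ‖y‖ = 1} => ‖T x y‖) :=
    ⟨M, by rintro _ ⟨y, rfl⟩; exact hunit x y⟩
  refine le_antisymm (Real.iSup_le (fun x => Real.iSup_le (hunit x) hM) hM) ?_
  refine Real.iSup_le (fun x => ?_) <|
    Real.iSup_nonneg fun _ => Real.iSup_nonneg fun _ => norm_nonneg _
  refine le_ciSup_of_le ⟨M, ?_⟩ x (le_ciSup (hrow_bdd x) x)
  rintro _ ⟨x', rfl⟩
  exact Real.iSup_le (hunit x') hM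

/-- For a bounded symmetric bilinear map T on a complex Hilbert space into a
complex Banach space, sup_{‖x‖=1,‖y‖=1} ‖T(x,y)‖ = sup_{‖x‖=1} ‖T(x,x)‖. -/
theorem stmt_17 {X Y : Type*} [NormedAddCommGroup X] [InnerProductSpace ℂ X] [CompleteSpace X]
    [NormedAddCommGroup Y] [NormedSpace ℂ Y] [CompleteSpace Y]
    (T : X →L[ℂ] X →L[ℂ] Y) (hT : ∀ x y : X, T x y = T y x) :
    (⨆ x : {x : X // ‖x‖ = 1}, ⨆ y : {y : X // ‖y‖ = 1}, ‖T x y‖) =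
      ⨆ x : {x : X // ‖x‖ = 1}, ‖T x x‖ :=
  stmt_17_general T hT
end
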